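/- arXiv:2412.15179 — 9 statements merged into one kernel-verified Lean document; each statement's English description precedes it below -/
import Mathlib

section
/- If (A,B,C) is uniformly distributed over ordered triples of distinct elements drawn from the values {1, 2, 4, ..., 2^(m-1)} (i.e., three cards drawn without replacement from a deck with these m values), then P(2A < B + C) = 2/3, for any m ≥ 3. -/
lemma aux_pow (a b c : ℕ) (hab : (2:ℝ)^a ≠ 2^b) (hac : (2:ℝ)^a ≠ 2^c) :
    (2 * (2:ℝ)^a < 2^b + 2^c ↔ ¬((2:ℝ)^b < 2^a ∧ (2:ℝ)^c < 2^a)) := by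
  have hab' : a ≠ b := fun e => hab (by rw [e])
  have hac' : a ≠ c := fun e => hac (by rw [e])
  have h2 : (1:ℝ) < 2 := one_lt_two
  have hiff : ∀ p q : ℕ, (2:ℝ)^p < 2^q ↔ p < q := fun p q => pow_lt_pow_iff_right₀ h2
  have hle : ∀ p q : ℕ, p < q → 2 * (2:ℝ)^p ≤ 2^q := by
    intro p q h
    calc 2 * (2:ℝ)^p = 2^(p+1) := by ring
    _ ≤ 2^q := pow_le_pow_right₀ h2.le h
  constructor
  · rintro h ⟨hb, hc⟩
    rw [hiff] at hb hc
    have h1 := hle b a hb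
    have h2 := hle c a hc
    have hpb : (0:ℝ) < 2^b := by positivity
    have hpc : (0:ℝ) < 2^c := by positivity
    linarith
  · intro h
    rcases Nat.lt_or_ge a b with hb | hb
    · have h1 := hle a b hb
      have h3 : (0:ℝ) < 2^c := by positivity
      linarith
    · have hba : b < a := lt_of_le_of_ne hb (Ne.symm hab')
      have hca : a < c := by
        rcases Nat.lt_or_ge a c with h'|h'
        · exact h'
        · exact absurd ⟨(hiff b a).2 hba, (hiff c a).2 (lt_of_le_of_ne h' (Ne.symm hac'))⟩ h
      have h1 := hle a c hca
      have h3 : (0:ℝ) < 2^b := by positivity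
      linarith

lemma aux_max3 {x y z : ℝ} (hxy : x ≠ y) (hxz : x ≠ z) (hyz : y ≠ z) :
    ¬(y < x ∧ z < x) ↔ ((x < y ∧ z < y) ∨ (x < z ∧ y < z)) := by
  constructor
  · intro hh
    rcases hyz.lt_or_gt with h|h
    · right
      refine ⟨?_, h⟩
      rcases hxz.lt_or_gt with h'|h'
      · exact h'
      · exact absurd ⟨lt_trans h h', h'⟩ hh
    · left
      refine ⟨?_, h⟩
      rcases hxy.lt_or_gt with h'|h'
      · exact h'
      · exact absurd ⟨h', lt_trans h h'⟩ hh
  · rintro (⟨u,v⟩|⟨u,v⟩) ⟨p,q⟩ <;> linarith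

/-- If (A,B,C) is a uniformly random ordered triple of pairwise distinct values
drawn from the deck {2^0, 2^1, ..., 2^(m-1)} (cards drawn without replacement),
then P(2A < B + C) = 2/3, stated here as a counting identity:
three times the number of winning triples equals two times the total number of
ordered triples of distinct values. -/
theorem stmt2 (m : ℕ) (hm : 3 ≤ m) :
    let deck : Finset ℝ := (Finset.range m).image (fun i => (2 : ℝ) ^ i)
    let T : Finset (ℝ × ℝ × ℝ) :=
      (deck ×ˢ deck ×ˢ deck).filter
        (fun t => t.1 ≠ t.2.1 ∧ t.1 ≠ t.2.2 ∧ t.2.1 ≠ t.2.2)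
    3 * (T.filter (fun t => 2 * t.1 < t.2.1 + t.2.2)).card = 2 * T.card := by
  intro deck T
  have hmem : ∀ t : ℝ × ℝ × ℝ, t ∈ T ↔
      ((t.1 ∈ deck ∧ t.2.1 ∈ deck ∧ t.2.2 ∈ deck) ∧
       (t.1 ≠ t.2.1 ∧ t.1 ≠ t.2.2 ∧ t.2.1 ≠ t.2.2)) := by
    intro t
    simp only [T, Finset.mem_filter, Finset.mem_product]
  set P1 : ℝ × ℝ × ℝ → Prop := fun t => t.2.1 < t.1 ∧ t.2.2 < t.1 with hP1
  set P2 : ℝ × ℝ × ℝ → Prop := fun t => t.1 < t.2.1 ∧ t.2.2 < t.2.1 with hP2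
  set P3 : ℝ × ℝ × ℝ → Prop := fun t => t.1 < t.2.2 ∧ t.2.1 < t.2.2 with hP3
  -- Step A: winning condition is ¬P1
  have hwin : T.filter (fun t => 2 * t.1 < t.2.1 + t.2.2) = T.filter (fun t => ¬ P1 t) := by
    apply Finset.filter_congr
    intro t ht
    obtain ⟨⟨hx, hy, hz⟩, hd1, hd2, hd3⟩ := (hmem t).1 ht
    obtain ⟨a, -, ha⟩ := Finset.mem_image.1 hx
    obtain ⟨b, -, hb⟩ := Finset.mem_image.1 hy
    obtain ⟨c, -, hc⟩ := Finset.mem_image.1 hz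
    simp only [hP1]
    rw [← ha, ← hb, ← hc]
    exact aux_pow a b c (ha.symm ▸ hb.symm ▸ hd1) (ha.symm ▸ hc.symm ▸ hd2)
  -- Step C: ¬P1 splits into P2 ∪ P3
  have hunion : T.filter (fun t => ¬ P1 t) = T.filter P2 ∪ T.filter P3 := by
    ext t
    simp only [Finset.mem_union, Finset.mem_filter]
    constructor
    · rintro ⟨ht, hn⟩
      obtain ⟨-, hd1, hd2, hd3⟩ := (hmem t).1 ht
      rcases (aux_max3 hd1 hd2 hd3).1 hn with h|h
      · exact Or.inl ⟨ht, h⟩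
      · exact Or.inr ⟨ht, h⟩
    · rintro (⟨ht, h⟩|⟨ht, h⟩) <;>
      · obtain ⟨-, hd1, hd2, hd3⟩ := (hmem t).1 ht
        refine ⟨ht, (aux_max3 hd1 hd2 hd3).2 ?_⟩
        first | exact Or.inl h | exact Or.inr h
  have hdisj : Disjoint (T.filter P2) (T.filter P3) := by
    rw [Finset.disjoint_left]
    intro t h2 h3
    obtain ⟨-, hp2⟩ := Finset.mem_filter.1 h2
    obtain ⟨-, hp3⟩ := Finset.mem_filter.1 h3
    exact absurd hp3.2 (not_lt.2 hp2.2.le)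
  -- bijections
  have hc12 : (T.filter P1).card = (T.filter P2).card := by
    apply Finset.card_nbij' (fun t => (t.2.1, t.1, t.2.2)) (fun t => (t.2.1, t.1, t.2.2))
    · rintro ⟨x, y, z⟩ ht
      obtain ⟨ht, hp⟩ := Finset.mem_filter.1 ht
      obtain ⟨⟨hx, hy, hz⟩, hd1, hd2, hd3⟩ := (hmem _).1 ht
      refine Finset.mem_filter.2 ⟨(hmem _).2 ⟨⟨hy, hx, hz⟩, hd1.symm, hd3, hd2⟩, ?_⟩
      exact hp
    · rintro ⟨x, y, z⟩ ht
      obtain ⟨ht, hp⟩ := Finset.mem_filter.1 ht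
      obtain ⟨⟨hx, hy, hz⟩, hd1, hd2, hd3⟩ := (hmem _).1 ht
      refine Finset.mem_filter.2 ⟨(hmem _).2 ⟨⟨hy, hx, hz⟩, hd1.symm, hd3, hd2⟩, ?_⟩
      exact hp
    · rintro ⟨x, y, z⟩ -; rfl
    · rintro ⟨x, y, z⟩ -; rfl
  have hc13 : (T.filter P1).card = (T.filter P3).card := by
    apply Finset.card_nbij' (fun t => (t.2.2, t.2.1, t.1)) (fun t => (t.2.2, t.2.1, t.1))
    · rintro ⟨x, y, z⟩ ht
      obtain ⟨ht, hp⟩ := Finset.mem_filter.1 ht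
      obtain ⟨⟨hx, hy, hz⟩, hd1, hd2, hd3⟩ := (hmem _).1 ht
      refine Finset.mem_filter.2 ⟨(hmem _).2 ⟨⟨hz, hy, hx⟩, hd3.symm, hd2.symm, hd1.symm⟩, ?_⟩
      exact ⟨hp.2, hp.1⟩
    · rintro ⟨x, y, z⟩ ht
      obtain ⟨ht, hp⟩ := Finset.mem_filter.1 ht
      obtain ⟨⟨hx, hy, hz⟩, hd1, hd2, hd3⟩ := (hmem _).1 ht
      refine Finset.mem_filter.2 ⟨(hmem _).2 ⟨⟨hz, hy, hx⟩, hd3.symm, hd2.symm, hd1.symm⟩, ?_⟩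
      exact ⟨hp.2, hp.1⟩
    · rintro ⟨x, y, z⟩ -; rfl
    · rintro ⟨x, y, z⟩ -; rfl
  have hsplit : (T.filter P1).card + (T.filter (fun t => ¬ P1 t)).card = T.card :=
    Finset.card_filter_add_card_filter_not P1
  have hu : (T.filter (fun t => ¬ P1 t)).card = (T.filter P2).card + (T.filter P3).card := by
    rw [hunion, Finset.card_union_of_disjoint hdisj]
  rw [hwin]
  omega
end

section
/- If A, B, C are iid random variables with values in ℝ, then P(2A < B + C) ≤ 2/3. -/
/-!
The rotation `(a, b, c) ↦ (b, c, a)` of coordinates preserves the product measure, so the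
three events `2A < B + C`, `2B < C + A`, `2C < A + B` have the same probability. Adding the
three inequalities gives `0 < 0`, so no outcome lies in all three events; hence the three
probabilities sum to at most `2`.
-/

open MeasureTheory

theorem measurePreserving_comp_perm {ι α : Type*} [Fintype ι] [MeasurableSpace α]
    (μ : Measure α) [SigmaFinite μ] (σ : Equiv.Perm ι) :
    MeasurePreserving (fun x : ι → α => x ∘ σ) (Measure.pi fun _ => μ)
      (Measure.pi fun _ => μ) := by
  convert measurePreserving_piCongrLeft (fun _ : ι => μ) σ.symm using 1
  ext x i
  rw [MeasurableEquiv.coe_piCongrLeft, Equiv.piCongrLeft_apply_eq_cast]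
  simp

theorem measure_add_measure_add_measure_le_two_mul {Ω : Type*} [MeasurableSpace Ω]
    (μ : Measure Ω) {s t u : Set Ω} (ht : MeasurableSet t) (hu : MeasurableSet u)
    (hstu : s ∩ t ∩ u = ∅) : μ s + μ t + μ u ≤ 2 * μ Set.univ := by
  have hdisj : Disjoint (s ∩ t) u := Set.disjoint_iff_inter_eq_empty.mpr hstu
  calc μ s + μ t + μ u = μ (s ∪ t) + μ (s ∩ t ∪ u) := by
        rw [← measure_union_add_inter s ht, measure_union hdisj hu, add_assoc]
    _ ≤ μ Set.univ + μ Set.univ :=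
        add_le_add (measure_mono (Set.subset_univ _)) (measure_mono (Set.subset_univ _))
    _ = 2 * μ Set.univ := (two_mul _).symm

theorem three_mul_measure_le_two_mul_of_inter_preimage_eq_empty {Ω : Type*}
    [MeasurableSpace Ω] {μ : Measure Ω} {T : Ω → Ω} (hT : MeasurePreserving T μ μ)
    {s : Set Ω} (hs : MeasurableSet s) (h : s ∩ T ⁻¹' s ∩ T ⁻¹' (T ⁻¹' s) = ∅) :
    3 * μ s ≤ 2 * μ Set.univ := by
  have hTs := hT.measurable hs
  calc 3 * μ s = μ s + μ (T ⁻¹' s) + μ (T ⁻¹' (T ⁻¹' s)) := by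
        rw [hT.measure_preimage hs.nullMeasurableSet,
          hT.measure_preimage hTs.nullMeasurableSet, hT.measure_preimage hs.nullMeasurableSet]
        ring
    _ ≤ 2 * μ Set.univ := measure_add_measure_add_measure_le_two_mul μ hTs (hT.measurable hTs) h

/-- If A, B, C are iid real-valued random variables (modeled by the 3-fold
product of a probability measure `μ` on `ℝ`), then `P(2A < B + C) ≤ 2/3`. -/
theorem stmt5 (μ : Measure ℝ) [IsProbabilityMeasure μ] :
    (Measure.pi fun _ : Fin 3 => μ) {x | 2 * x 0 < x 1 + x 2} ≤ 2 / 3 := by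
  have hs : MeasurableSet {x : Fin 3 → ℝ | 2 * x 0 < x 1 + x 2} :=
    measurableSet_lt (by fun_prop) (by fun_prop)
  have h := three_mul_measure_le_two_mul_of_inter_preimage_eq_empty
    (measurePreserving_comp_perm μ (finRotate 3)) hs <| by
    refine Set.eq_empty_of_forall_notMem fun x ⟨⟨h0, h1⟩, h2⟩ => ?_
    simp only [Set.mem_preimage, Set.mem_ofPred_eq, Function.comp_apply, finRotate_apply,
      Fin.reduceAdd] at h0 h1 h2
    linarith
  rw [measure_univ, mul_one] at h
  rwa [ENNReal.le_div_iff_mul_le (by norm_num) (by norm_num), mul_comm]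
end

section
/- For every m ≥ 1, if A, B, C are iid uniform on the set {1, 2, 4, ..., 2^(m-1)} (m distinct powers of 2, each with probability 1/m), then P(2A < B + C) ≥ 2/3 - 3/m. -/
open MeasureTheory ENNReal Finset

/-!
If the exponent of `A` is smaller than that of `B` or of `C`, then `2A ≤ max(B, C) < B + C`.
Among the `m³` equally likely exponent triples `(i, j, k)`, those with `j, k ≤ i` number
`∑_{i<m} (i+1)² = m(m+1)(2m+1)/6`, so the probability is at least
`1 - (m+1)(2m+1)/(6m²) ≥ 2/3 - 3/m`.
-/

theorem MeasureTheory.Measure.pi_smul_finsetSum_dirac {ι β : Type*} [Fintype ι] [DecidableEq ι]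
    {α : ι → Type*} [∀ i, MeasurableSpace (α i)] (c : ι → ℝ≥0∞) (hc : ∀ i, c i ≠ ∞)
    (s : ι → Finset β) (f : ∀ i, β → α i) :
    Measure.pi (fun i => c i • ∑ b ∈ s i, Measure.dirac (f i b)) =
      (∏ i, c i) • ∑ g ∈ Fintype.piFinset s, Measure.dirac (fun i => f i (g i)) := by
  have (i : ι) : IsFiniteMeasure (c i • ∑ b ∈ s i, Measure.dirac (f i b)) :=
    ⟨by simp [ENNReal.mul_lt_top_iff, (hc i).lt_top]⟩
  refine Measure.pi_eq fun t ht => ?_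
  classical
  simp only [Measure.smul_apply, Measure.coe_finsetSum, Finset.sum_apply, smul_eq_mul,
    Measure.dirac_apply' _ (MeasurableSet.univ_pi ht), Measure.dirac_apply' _ (ht _),
    Finset.prod_mul_distrib, Finset.prod_univ_sum]
  congr 1
  exact Finset.sum_congr rfl fun g _ => by simp [Set.indicator_apply, Finset.prod_ite_zero]

theorem MeasureTheory.Measure.finsetSum_dirac_apply {α β : Type*} [MeasurableSpace α]
    (t : Finset β) (F : β → α) {S : Set α} (hS : MeasurableSet S) [DecidablePred (F · ∈ S)] :
    (∑ b ∈ t, Measure.dirac (F b)) S = #{b ∈ t | F b ∈ S} := by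
  simp [Measure.dirac_apply' _ hS, Set.indicator_apply]

theorem two_mul_two_pow_lt_add_of_lt {R : Type*} [Semiring R] [PartialOrder R]
    [IsStrictOrderedRing R] {a b : ℕ} (h : a < b) (c : ℕ) :
    2 * (2 : R) ^ a < 2 ^ b + 2 ^ c :=
  calc 2 * (2 : R) ^ a = 2 ^ (a + 1) := (pow_succ' _ _).symm
    _ ≤ 2 ^ b := pow_le_pow_right₀ one_le_two h
    _ < 2 ^ b + 2 ^ c := lt_add_of_pos_right _ (by positivity)

theorem six_mul_sum_range_succ_sq (m : ℕ) :
    6 * ∑ i ∈ range m, (i + 1) ^ 2 = m * (m + 1) * (2 * m + 1) := by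
  induction m with
  | zero => simp
  | succ n ih => rw [sum_range_succ, mul_add, ih]; ring

theorem card_filter_forall_le_head (m n : ℕ) :
    #{g ∈ Fintype.piFinset (fun _ : Fin (n + 1) => range m) | ∀ j : Fin n, g j.succ ≤ g 0} =
      ∑ i ∈ range m, (i + 1) ^ n := by
  have hfiber :
      {g ∈ Fintype.piFinset (fun _ : Fin (n + 1) => range m) | ∀ j : Fin n, g j.succ ≤ g 0} =
        (range m).biUnion fun i =>
          Fintype.piFinset (Fin.cons ({i} : Finset ℕ) fun _ => range (i + 1)) := by
    ext g
    simp only [mem_filter, Fintype.mem_piFinset, mem_biUnion, Fin.forall_fin_succ,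
      Fin.cons_zero, Fin.cons_succ, mem_singleton, mem_range, Nat.lt_succ_iff]
    exact ⟨fun ⟨⟨h0, _⟩, h⟩ => ⟨g 0, h0, rfl, h⟩,
      fun ⟨_, hi, h0, h⟩ => h0 ▸ ⟨⟨hi, fun j => (h j).trans_lt hi⟩, h⟩⟩
  rw [hfiber, card_biUnion]
  · simp [Fin.prod_univ_succ]
  · intro i _ j _ hij
    simp only [Function.onFun, disjoint_left, Fintype.mem_piFinset, Fin.forall_fin_succ]
    simp +contextual [hij]

theorem card_filter_exists_head_lt_add (m n : ℕ) :
    #{g ∈ Fintype.piFinset (fun _ : Fin (n + 1) => range m) | ∃ j : Fin n, g 0 < g j.succ} +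
      ∑ i ∈ range m, (i + 1) ^ n = m ^ (n + 1) := by
  rw [← card_filter_forall_le_head]
  simpa using card_filter_add_card_filter_not
    (s := Fintype.piFinset fun _ : Fin (n + 1) => range m) fun g => ∃ j : Fin n, g 0 < g j.succ

theorem two_mul_cube_le_card_filter_exists_head_lt (m : ℕ) :
    2 * m ^ 3 ≤
      3 * #{g ∈ Fintype.piFinset (fun _ : Fin 3 => range m) | ∃ j : Fin 2, g 0 < g j.succ} +
        9 * m ^ 2 := by
  have hcount := card_filter_exists_head_lt_add m 2
  have hsum := six_mul_sum_range_succ_sq m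
  have := Nat.le_self_pow two_ne_zero m
  generalize ∑ i ∈ range m, (i + 1) ^ 2 = S at hcount hsum
  ring_nf at *
  omega

theorem two_div_three_sub_le_inv_pow_mul (m N : ℕ) (h : 2 * m ^ 3 ≤ 3 * N + 9 * m ^ 2) :
    2 / 3 - 3 / (m : ℝ≥0∞) ≤ (m : ℝ≥0∞)⁻¹ ^ 3 * N := by
  rcases m.eq_zero_or_pos with rfl | hm
  · simp [ENNReal.div_zero]
  have hprod_ne_top : (m : ℝ≥0∞)⁻¹ ^ 3 * N ≠ ∞ := by simp [ENNReal.mul_eq_top, hm.ne']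
  have hdiv_ne_top : 3 / (m : ℝ≥0∞) ≠ ∞ := by simp [ENNReal.div_eq_top, hm.ne']
  rw [tsub_le_iff_right, ← ENNReal.toReal_le_toReal (by finiteness)
    (ENNReal.add_ne_top.2 ⟨hprod_ne_top, hdiv_ne_top⟩), ENNReal.toReal_add hprod_ne_top hdiv_ne_top]
  simp only [ENNReal.toReal_mul, ENNReal.toReal_div, ENNReal.toReal_pow, ENNReal.toReal_inv,
    ENNReal.toReal_natCast, ENNReal.toReal_ofNat]
  have hm_pos : (0 : ℝ) < m := by exact_mod_cast hm
  have hreal : (2 * m ^ 3 : ℝ) ≤ 3 * N + 9 * m ^ 2 := by exact_mod_cast h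
  rw [div_le_iff₀ three_pos]
  field_simp
  linarith

theorem stmt7_general (m : ℕ)
    (μ : Measure ℝ)
    (hμ : μ = (m : ℝ≥0∞)⁻¹ • ∑ i ∈ Finset.range m, Measure.dirac ((2 : ℝ) ^ i)) :
    2 / 3 - 3 / (m : ℝ≥0∞) ≤
      (Measure.pi fun _ : Fin 3 => μ) {x | 2 * x 0 < x 1 + x 2} := by
  classical
  rcases m.eq_zero_or_pos with rfl | hm
  · simp [ENNReal.div_zero] -- `3 / 0 = ∞` in `ℝ≥0∞`, so the left side is `0`
  have hS : MeasurableSet {x : Fin 3 → ℝ | 2 * x 0 < x 1 + x 2} :=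
    measurableSet_lt (by fun_prop) (by fun_prop)
  subst hμ
  rw [Measure.pi_smul_finsetSum_dirac _ (fun _ => ENNReal.inv_ne_top.2 (by positivity)),
    Measure.smul_apply, Measure.finsetSum_dirac_apply _ _ hS, prod_const, card_univ,
    Fintype.card_fin, smul_eq_mul]
  calc 2 / 3 - 3 / (m : ℝ≥0∞)
      ≤ (m : ℝ≥0∞)⁻¹ ^ 3 *
          #{g ∈ Fintype.piFinset (fun _ : Fin 3 => range m) | ∃ j : Fin 2, g 0 < g j.succ} :=
        two_div_three_sub_le_inv_pow_mul m _ (two_mul_cube_le_card_filter_exists_head_lt m)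
    _ ≤ _ := by
        gcongr with g
        simp only [Fin.exists_fin_two, Fin.succ_zero_eq_one, Fin.succ_one_eq_two, Set.mem_ofPred_eq]
        rintro (h | h)
        · exact two_mul_two_pow_lt_add_of_lt h _
        · exact (two_mul_two_pow_lt_add_of_lt h _).trans_eq (add_comm _ _)

/-- For every m ≥ 1, if A, B, C are iid uniform on the m distinct values
{2^0, 2^1, ..., 2^(m-1)}, then P(2A < B + C) ≥ 2/3 - 3/m. -/
theorem stmt7 (m : ℕ) (hm : 1 ≤ m)
    (μ : Measure ℝ)
    (hμ : μ = (m : ℝ≥0∞)⁻¹ • ∑ i ∈ Finset.range m, Measure.dirac ((2 : ℝ) ^ i)) :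
    2 / 3 - 3 / (m : ℝ≥0∞) ≤
      (Measure.pi fun _ : Fin 3 => μ) {x | 2 * x 0 < x 1 + x 2} :=
  stmt7_general m μ hμ
end

section
/- The supremum over all probability measures μ on ℕ (equivalently, on ℝ₊) of P_{μ⊗3}(2X₃ < X₁ + X₂) equals 2/3, where X₁, X₂, X₃ are iid with law μ. -/
open MeasureTheory ProbabilityTheory Filter Topology
open scoped ENNReal

/-!
Upper bound: the three events `2 Xᵢ < Xⱼ + Xₖ` are equally likely by exchangeability, and at
most two of them occur at once (adding all three gives `0 < 0`), so each has probability at most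
`2/3`.

Lower bound: for `X = 2 ^ K` with `K` valued in `ℕ`, `2 X₃ < X₁ + X₂` holds iff
`K₃ < max K₁ K₂`. The complementary event, `K₃` being a weak maximum, has probability at most
`1/3` (the three strict maxima are disjoint and equally likely) plus the probability of a tie
`K₃ = K₁` or `K₃ = K₂`, which is at most `2/n` when `K` is uniform on `{0, …, n - 1}`.
-/

theorem MeasureTheory.measurePreserving_comp_equiv {ι ι' α : Type*} [Fintype ι] [Fintype ι']
    [MeasurableSpace α] (μ : Measure α) [SigmaFinite μ] (e : ι ≃ ι') :
    MeasurePreserving (fun x : ι' → α => x ∘ e) (Measure.pi fun _ => μ)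
      (Measure.pi fun _ => μ) := by
  convert measurePreserving_arrowCongr' (fun _ => μ) (fun _ => μ) e.symm
    (MeasurableEquiv.refl α) fun _ => .id μ
  rfl

theorem MeasureTheory.measure_add_add_le_two_mul {Ω : Type*} [MeasurableSpace Ω] (μ : Measure Ω)
    {A B C : Set Ω} (hB : MeasurableSet B) (hC : MeasurableSet C) (h : A ∩ B ∩ C = ∅) :
    μ A + μ B + μ C ≤ 2 * μ Set.univ :=
  calc μ A + μ B + μ C = μ (A ∪ B) + (μ (A ∩ B) + μ C) := by
        rw [← measure_union_add_inter A hB]; ring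
    _ = μ (A ∪ B) + μ (A ∩ B ∪ C) := by
        rw [measure_union (Set.disjoint_iff_inter_eq_empty.2 h) hC]
    _ ≤ μ Set.univ + μ Set.univ := by gcongr <;> exact Set.subset_univ _
    _ = 2 * μ Set.univ := (two_mul _).symm

theorem measure_pi_two_mul_lt_add_le_two_div_three (μ : Measure ℝ) [IsProbabilityMeasure μ] :
    Measure.pi (fun _ : Fin 3 => μ) {x | 2 * x 2 < x 0 + x 1} ≤ 2 / 3 := by
  set P := Measure.pi fun _ : Fin 3 => μ
  have hmeas (i j k : Fin 3) : MeasurableSet {x : Fin 3 → ℝ | 2 * x i < x j + x k} :=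
    measurableSet_lt (by fun_prop) (by fun_prop)
  have h1 : P {x | 2 * x 1 < x 0 + x 2} = P {x | 2 * x 2 < x 0 + x 1} :=
    (measurePreserving_comp_equiv μ (Equiv.swap 1 2)).measure_preimage
      (hmeas 2 0 1).nullMeasurableSet
  have h0 : P {x | 2 * x 0 < x 1 + x 2} = P {x | 2 * x 2 < x 0 + x 1} :=
    (measurePreserving_comp_equiv μ (finRotate 3)).measure_preimage
      (hmeas 2 0 1).nullMeasurableSet
  have hsum := measure_add_add_le_two_mul P (A := {x | 2 * x 2 < x 0 + x 1})
    (hmeas 1 0 2) (hmeas 0 1 2) <| by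
      ext x
      simp only [Set.mem_inter_iff, Set.mem_ofPred_eq, Set.mem_empty_iff_false, iff_false]
      rintro ⟨⟨h2, h1⟩, h0⟩
      linarith
  rw [h1, h0, measure_univ, mul_one] at hsum
  rw [ENNReal.le_div_iff_mul_le (by norm_num) (by norm_num)]
  calc _ = P {x | 2 * x 2 < x 0 + x 1} + _ + _ := by ring
    _ ≤ 2 := hsum

section Countable

variable {α : Type*} [Countable α] [MeasurableSpace α] [MeasurableSingletonClass α]
  (ν : Measure α) [IsProbabilityMeasure ν]

theorem measure_pi_eq_le {δ : ℝ≥0∞} (hδ : ∀ a, ν {a} ≤ δ) :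
    Measure.pi (fun _ : Fin 3 => ν) {x | x 0 = x 2} ≤ δ := by
  have hunion : {x : Fin 3 → α | x 0 = x 2} = ⋃ a, Set.univ.pi ![{a}, Set.univ, {a}] := by
    ext x
    simp [Fin.forall_fin_succ, eq_comm]
  calc _ = ∑' a, ν {a} * ν {a} := by
        rw [hunion, measure_iUnion]
        · simp [Measure.pi_pi, Fin.prod_univ_three]
        · intro a b hab
          refine Set.disjoint_left.2 fun x hx hx' => hab ?_
          simpa using (hx 0 trivial).symm.trans (hx' 0 trivial)
        · exact fun _ => (Set.to_countable _).measurableSet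
    _ ≤ ∑' a, ν {a} * δ := ENNReal.tsum_le_tsum fun a => by gcongr; exact hδ a
    _ = δ := by
      rw [ENNReal.tsum_mul_right, ← Set.indicator_univ (fun a => ν {a}),
        Measure.tsum_indicator_apply_singleton _ _ .univ, measure_univ, one_mul]

variable [LinearOrder α]

theorem measure_pi_lt_lt_le_one_div_three :
    Measure.pi (fun _ : Fin 3 => ν) {x | x 0 < x 2 ∧ x 1 < x 2} ≤ 1 / 3 := by
  set P := Measure.pi fun _ : Fin 3 => ν
  have hmeas (s : Set (Fin 3 → α)) : MeasurableSet s := s.to_countable.measurableSet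
  have h0 : P {x | x 2 < x 0 ∧ x 1 < x 0} = P {x | x 0 < x 2 ∧ x 1 < x 2} :=
    (measurePreserving_comp_equiv ν (Equiv.swap 0 2)).measure_preimage
      (hmeas {x | x 0 < x 2 ∧ x 1 < x 2}).nullMeasurableSet
  have h1 : P {x | x 0 < x 1 ∧ x 2 < x 1} = P {x | x 0 < x 2 ∧ x 1 < x 2} :=
    (measurePreserving_comp_equiv ν (Equiv.swap 1 2)).measure_preimage
      (hmeas {x | x 0 < x 2 ∧ x 1 < x 2}).nullMeasurableSet
  have hsum : P {x | x 2 < x 0 ∧ x 1 < x 0} + P {x | x 0 < x 1 ∧ x 2 < x 1}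
      + P {x | x 0 < x 2 ∧ x 1 < x 2} ≤ 1 := by
    rw [← measure_union _ (hmeas _), ← measure_union _ (hmeas _)]
    · exact prob_le_one
    · exact Set.disjoint_union_left.2 ⟨Set.disjoint_left.2 fun x hx hx' => lt_asymm hx.1 hx'.1,
        Set.disjoint_left.2 fun x hx hx' => lt_asymm hx.2 hx'.2⟩
    · exact Set.disjoint_left.2 fun x hx hx' => lt_asymm hx.2 hx'.1
  rw [h0, h1] at hsum
  rw [ENNReal.le_div_iff_mul_le (by norm_num) (by norm_num), mul_comm]
  calc _ = P {x | x 0 < x 2 ∧ x 1 < x 2} + _ + _ := by ring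
    _ ≤ 1 := hsum

theorem measure_pi_le_le_le_one_div_three_add {δ : ℝ≥0∞} (hδ : ∀ a, ν {a} ≤ δ) :
    Measure.pi (fun _ : Fin 3 => ν) {x | x 0 ≤ x 2 ∧ x 1 ≤ x 2} ≤ 1 / 3 + 2 * δ := by
  set P := Measure.pi fun _ : Fin 3 => ν
  have hsub : {x : Fin 3 → α | x 0 ≤ x 2 ∧ x 1 ≤ x 2} ⊆
      {x | x 0 < x 2 ∧ x 1 < x 2} ∪ {x | x 0 = x 2} ∪ {x | x 1 = x 2} := by
    rintro x ⟨h0, h1⟩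
    rcases h0.lt_or_eq with h0 | h0 <;> rcases h1.lt_or_eq with h1 | h1 <;> simp [*]
  have htie : P {x | x 1 = x 2} = P {x | x 0 = x 2} :=
    (measurePreserving_comp_equiv ν (Equiv.swap 0 1)).measure_preimage
      (Set.to_countable {x : Fin 3 → α | x 0 = x 2}).measurableSet.nullMeasurableSet
  calc P _ ≤ P {x | x 0 < x 2 ∧ x 1 < x 2} + P {x | x 0 = x 2} + P {x | x 1 = x 2} :=
        (measure_mono hsub).trans <|
          (measure_union_le _ _).trans (add_le_add_left (measure_union_le _ _) _)
    _ ≤ 1 / 3 + δ + δ := by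
        rw [htie]
        gcongr
        exacts [measure_pi_lt_lt_le_one_div_three ν, measure_pi_eq_le ν hδ,
          measure_pi_eq_le ν hδ]
    _ = 1 / 3 + 2 * δ := by ring

end Countable

theorem two_mul_pow_lt_add_pow_iff {r : ℝ} (hr : 2 ≤ r) {a b c : ℕ} :
    2 * r ^ c < r ^ a + r ^ b ↔ c < a ∨ c < b := by
  have of_lt_left {a b : ℕ} (h : c < a) : 2 * r ^ c < r ^ a + r ^ b :=
    calc 2 * r ^ c ≤ r ^ (c + 1) := by rw [pow_succ']; gcongr
      _ ≤ r ^ a := pow_le_pow_right₀ (by linarith) h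
      _ < r ^ a + r ^ b := lt_add_of_pos_right _ (by positivity)
  refine ⟨fun h => ?_, ?_⟩
  · by_contra! hc
    have := pow_le_pow_right₀ (by linarith : 1 ≤ r) hc.1
    have := pow_le_pow_right₀ (by linarith : 1 ≤ r) hc.2
    linarith
  · rintro (h | h)
    · exact of_lt_left h
    · rw [add_comm]; exact of_lt_left h

theorem exists_two_div_three_le_measure_pi_add {δ : ℝ≥0∞} (ν : Measure ℕ)
    [IsProbabilityMeasure ν] (hδ : ∀ k, ν {k} ≤ δ) :
    ∃ μ : Measure ℝ, IsProbabilityMeasure μ ∧ μ (Set.Iio 0) = 0 ∧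
      2 / 3 ≤ Measure.pi (fun _ : Fin 3 => μ) {x | 2 * x 2 < x 0 + x 1} + 2 * δ := by
  have hf : Measurable fun k : ℕ => (2 : ℝ) ^ k := measurable_from_nat
  refine ⟨ν.map fun k => (2 : ℝ) ^ k, Measure.isProbabilityMeasure_map hf.aemeasurable, ?_,
    ?_⟩
  · rw [Measure.map_apply hf measurableSet_Iio]
    convert measure_empty (μ := ν)
    exact Set.eq_empty_of_forall_notMem fun k hk => (pow_pos (two_pos : (0 : ℝ) < 2) k).not_gt hk
  set P := Measure.pi fun _ : Fin 3 => ν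
  set S := {x : Fin 3 → ℕ | x 0 ≤ x 2 ∧ x 1 ≤ x 2}
  have hpre :
      (fun (x : Fin 3 → ℕ) i => (2 : ℝ) ^ x i) ⁻¹' {x | 2 * x 2 < x 0 + x 1} = Sᶜ := by
    ext x
    simp [S, two_mul_pow_lt_add_pow_iff le_rfl, imp_iff_not_or]
  rw [← (measurePreserving_pi _ _ fun _ => ⟨hf, rfl⟩).measure_preimage
    (measurableSet_lt (by fun_prop) (by fun_prop)).nullMeasurableSet, hpre]
  refine (ENNReal.add_le_add_iff_right (a := 1 / 3) (by simp)).1 ?_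
  calc 2 / 3 + 1 / 3 = P Sᶜ + P S := by
        rw [ENNReal.div_add_div_same, two_add_one_eq_three,
          ENNReal.div_self three_ne_zero ENNReal.ofNat_ne_top, add_comm,
          measure_add_measure_compl S.to_countable.measurableSet, measure_univ]
    _ ≤ P Sᶜ + (1 / 3 + 2 * δ) := by
        gcongr; exact measure_pi_le_le_le_one_div_three_add ν hδ
    _ = P Sᶜ + 2 * δ + 1 / 3 := by ring

theorem uniformOn_range_singleton_le (n k : ℕ) :
    uniformOn (Finset.range n : Set ℕ) {k} ≤ (n : ℝ≥0∞)⁻¹ := by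
  rw [← Finset.coe_singleton, uniformOn_apply_finset, Finset.card_range, ENNReal.div_eq_inv_mul]
  calc _ ≤ (n : ℝ≥0∞)⁻¹ * 1 := by
        gcongr
        exact_mod_cast (Finset.card_le_card Finset.inter_subset_right).trans
          (Finset.card_singleton k).le
    _ = _ := mul_one _

/-- The supremum, over all probability measures μ on ℝ supported on the
nonnegative reals, of P_{μ⊗3}(2X₃ < X₁ + X₂) equals 2/3. -/
theorem stmt9 :
    (⨆ μ : {μ : Measure ℝ // IsProbabilityMeasure μ ∧ μ (Set.Iio 0) = 0},
      (Measure.pi fun _ : Fin 3 => (μ : Measure ℝ))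
        {x | 2 * x 2 < x 0 + x 1}) = 2 / 3 := by
  refine le_antisymm (iSup_le fun μ =>
    have := μ.2.1; measure_pi_two_mul_lt_add_le_two_div_three μ) ?_
  have hlim : Tendsto (fun n : ℕ => 2 * (n : ℝ≥0∞)⁻¹) atTop (𝓝 0) := by
    simpa using ENNReal.Tendsto.const_mul ENNReal.tendsto_inv_nat_nhds_zero
      (Or.inr ENNReal.ofNat_ne_top)
  refine ge_of_tendsto (by simpa using tendsto_const_nhds.add hlim)
    (eventually_atTop.2 ⟨1, fun n hn => ?_⟩)
  have := isProbabilityMeasure_uniformOn (Finset.range n).finite_toSet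
    (by simpa using Nat.one_le_iff_ne_zero.1 hn)
  obtain ⟨μ, hμ, hμ0, hle⟩ :=
    exists_two_div_three_le_measure_pi_add _ (uniformOn_range_singleton_le n)
  refine hle.trans (add_le_add_left ?_ _)
  exact le_iSup_of_le ⟨μ, hμ, hμ0⟩ le_rfl
end

section
/- Let X be a measurable space, n ≤ m natural numbers, and f : Xⁿ → ℝ a bounded measurable function. Then for every probability measure μ on X, E_{μ⊗n}[f] ≤ sup over x₁,...,x_m ∈ X of the average of f(x_{i(1)},...,x_{i(n)}) over all injections i : [n] ↪ [m]. -/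
open MeasureTheory

/-- Precomposition with an injection is measure preserving between product
probability measures. -/
lemma aux_measurePreserving {X : Type*} [MeasurableSpace X] (μ : Measure X)
    [IsProbabilityMeasure μ] {n m : ℕ} (i : Fin n ↪ Fin m) :
    MeasurePreserving (fun x : Fin m → X => fun k => x (i k))
      (Measure.pi fun _ : Fin m => μ) (Measure.pi fun _ : Fin n => μ) := by
  classical
  have hmeas : Measurable fun x : Fin m → X => fun k => x (i k) :=
    measurable_pi_lambda _ fun k => measurable_pi_apply _
  refine ⟨hmeas, (Measure.pi_eq fun s hs => ?_).symm⟩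
  rw [Measure.map_apply hmeas (MeasurableSet.univ_pi hs)]
  set t : Fin m → Set X := fun j => if h : ∃ k, i k = j then s h.choose else Set.univ with ht
  have hchoose : ∀ k : Fin n, ∀ (h : ∃ k', i k' = i k), h.choose = k := by
    intro k h
    exact i.injective h.choose_spec
  have hpre : (fun x : Fin m → X => fun k => x (i k)) ⁻¹' Set.pi Set.univ s
      = Set.pi Set.univ t := by
    ext x
    simp only [Set.mem_preimage, Set.mem_univ_pi, ht]
    constructor
    · intro h j
      by_cases hj : ∃ k, i k = j
      · rw [dif_pos hj]
        have := h hj.choose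
        rwa [hj.choose_spec] at this
      · rw [dif_neg hj]; trivial
    · intro h k
      have := h (i k)
      rw [dif_pos ⟨k, rfl⟩, hchoose k ⟨k, rfl⟩] at this
      exact this
  rw [hpre, Measure.pi_pi]
  have h1 : ∀ j ∈ Finset.univ, j ∉ Finset.univ.map i → μ (t j) = 1 := by
    intro j _ hj
    have hj' : ¬ ∃ k, i k = j := by
      intro ⟨k, hk⟩
      exact hj (Finset.mem_map.2 ⟨k, Finset.mem_univ _, hk⟩)
    simp [ht, dif_neg hj']
  calc ∏ j : Fin m, μ (t j) = ∏ j ∈ Finset.univ.map i, μ (t j) := by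
        refine (Finset.prod_subset (Finset.subset_univ _) h1).symm
    _ = ∏ k : Fin n, μ (t (i k)) := Finset.prod_map _ _ _
    _ = ∏ k : Fin n, μ (s k) := by
        refine Finset.prod_congr rfl fun k _ => ?_
        rw [ht]
        simp only []
        rw [dif_pos ⟨k, rfl⟩, hchoose k ⟨k, rfl⟩]

/-- For a bounded measurable f : Xⁿ → ℝ and any probability measure μ on X,
the expectation of f under μ⊗n is at most the supremum over x₁,...,x_m ∈ X of
the average of f(x_{i(1)},...,x_{i(n)}) over all injections i : [n] ↪ [m]. -/
theorem stmt10 {X : Type*} [MeasurableSpace X] (n m : ℕ) (hnm : n ≤ m)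
    (f : (Fin n → X) → ℝ) (hf : Measurable f) (C : ℝ) (hbd : ∀ y, |f y| ≤ C)
    (μ : Measure X) [IsProbabilityMeasure μ] :
    ∫ y, f y ∂(Measure.pi fun _ : Fin n => μ) ≤
      ⨆ x : Fin m → X,
        (∑ i : Fin n ↪ Fin m, f (fun k => x (i k))) / (Fintype.card (Fin n ↪ Fin m)) := by
  classical
  haveI : Nonempty (Fin n ↪ Fin m) := ⟨Fin.castLEEmb hnm⟩
  set N : ℕ := Fintype.card (Fin n ↪ Fin m) with hN
  have hNpos : 0 < (N : ℝ) := by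
    exact_mod_cast Fintype.card_pos
  set g : (Fin m → X) → ℝ := fun x => (∑ i : Fin n ↪ Fin m, f (fun k => x (i k))) / N with hg
  -- integrability of the pieces
  have hfint : Integrable f (Measure.pi fun _ : Fin n => μ) :=
    ⟨hf.aestronglyMeasurable,
      HasFiniteIntegral.of_bounded (C := C) (Filter.Eventually.of_forall fun y => by
        simpa [Real.norm_eq_abs] using hbd y)⟩
  have hcomp : ∀ i : Fin n ↪ Fin m,
      Integrable (fun x : Fin m → X => f (fun k => x (i k)))
        (Measure.pi fun _ : Fin m => μ) := fun i =>
    ((aux_measurePreserving μ i).integrable_comp hf.aestronglyMeasurable).mpr hfint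
  have hsumint : Integrable (fun x => ∑ i : Fin n ↪ Fin m, f (fun k => x (i k)))
      (Measure.pi fun _ : Fin m => μ) :=
    integrable_finset_sum _ fun i _ => hcomp i
  have hgint : Integrable g (Measure.pi fun _ : Fin m => μ) := by
    simpa [hg, div_eq_mul_inv] using hsumint.mul_const ((N : ℝ)⁻¹)
  -- the expectation of g equals the expectation of f
  have hEq : ∫ x, g x ∂(Measure.pi fun _ : Fin m => μ)
      = ∫ y, f y ∂(Measure.pi fun _ : Fin n => μ) := by
    have h1 : ∀ i : Fin n ↪ Fin m,
        ∫ x, f (fun k => x (i k)) ∂(Measure.pi fun _ : Fin m => μ)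
          = ∫ y, f y ∂(Measure.pi fun _ : Fin n => μ) := by
      intro i
      have h := integral_map (μ := Measure.pi fun _ : Fin m => μ)
        (φ := fun x : Fin m → X => fun k => x (i k))
        (measurable_pi_lambda _ fun k => measurable_pi_apply _).aemeasurable
        hf.aestronglyMeasurable
      rw [(aux_measurePreserving μ i).map_eq] at h
      exact h.symm
    calc ∫ x, g x ∂(Measure.pi fun _ : Fin m => μ)
        = (∫ x, (∑ i : Fin n ↪ Fin m, f (fun k => x (i k)))
            ∂(Measure.pi fun _ : Fin m => μ)) / N := by
          rw [hg]; exact integral_div _ _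
      _ = (∑ i : Fin n ↪ Fin m,
            ∫ x, f (fun k => x (i k)) ∂(Measure.pi fun _ : Fin m => μ)) / N := by
          rw [integral_finset_sum _ fun i _ => hcomp i]
      _ = ((N : ℝ) * ∫ y, f y ∂(Measure.pi fun _ : Fin n => μ)) / N := by
          simp [h1, hN, Finset.sum_const, nsmul_eq_mul]
      _ = ∫ y, f y ∂(Measure.pi fun _ : Fin n => μ) := by
          field_simp
  -- g is bounded above, so its integral is at most its supremum
  have hbdd : BddAbove (Set.range g) := by
    refine ⟨C, ?_⟩
    rintro _ ⟨x, rfl⟩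
    rw [hg]
    simp only []
    rw [div_le_iff₀ hNpos]
    calc ∑ i : Fin n ↪ Fin m, f (fun k => x (i k))
        ≤ ∑ _i : Fin n ↪ Fin m, C :=
          Finset.sum_le_sum fun i _ => (le_abs_self _).trans (hbd _)
      _ = C * N := by simp [hN, mul_comm]
  have hle : ∫ x, g x ∂(Measure.pi fun _ : Fin m => μ) ≤ ⨆ x, g x := by
    calc ∫ x, g x ∂(Measure.pi fun _ : Fin m => μ)
        ≤ ∫ _x, (⨆ x, g x) ∂(Measure.pi fun _ : Fin m => μ) :=
          integral_mono hgint (integrable_const _) fun x => le_ciSup hbdd x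
      _ = ⨆ x, g x := by simp
  rw [← hEq]
  exact hle
end

section
/- Let X be a measurable space and f : Xⁿ → ℝ bounded measurable. Then sup over probability measures μ on X of E_{μ⊗n}[f] equals the limit as m → ∞ of sup over x₁,...,x_m ∈ X of the average of f(x_{i(1)},...,x_{i(n)}) over injections i : [n] ↪ [m]. -/
/-!
If the sample `x` is drawn from `μ^m`, each term of the U-statistic of `f` has law `μ^n`, so the
U-statistic has mean `E_{μ^n}[f]` and some sample does at least as well as `μ`. Conversely, the
average of `f` over all maps `[n] → [m]` is the integral of `f` against the `n`-th power of the
empirical measure of `x`; the injective maps form a proportion `m(m-1)⋯(m-n+1)/m^n → 1` of them, so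
the two averages differ by at most `2C(1 - m(m-1)⋯(m-n+1)/m^n) → 0`.
-/

open MeasureTheory ProbabilityTheory Filter Finset

theorem abs_sum_le_card_mul {β : Type*} {s : Finset β} {a : β → ℝ} {C : ℝ}
    (ha : ∀ b ∈ s, |a b| ≤ C) : |∑ b ∈ s, a b| ≤ #s * C :=
  (abs_sum_le_sum_abs a s).trans ((sum_le_card_nsmul s _ C ha).trans_eq (nsmul_eq_mul _ _))

theorem sum_div_card_le {β : Type*} {s : Finset β} (hs : s.Nonempty) {a : β → ℝ} {C : ℝ}
    (ha : ∀ b ∈ s, |a b| ≤ C) : (∑ b ∈ s, a b) / #s ≤ C := by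
  rw [div_le_iff₀ (by exact_mod_cast hs.card_pos), mul_comm]
  exact (le_abs_self _).trans (abs_sum_le_card_mul ha)

theorem abs_sum_div_card_sub_sum_div_card_le {β : Type*} [DecidableEq β] {s t : Finset β}
    (hs : s.Nonempty) (hst : s ⊆ t) {a : β → ℝ} {C : ℝ} (ha : ∀ b ∈ t, |a b| ≤ C) :
    |(∑ b ∈ s, a b) / #s - (∑ b ∈ t, a b) / #t| ≤ 2 * C * (1 - #s / #t) := by
  have hp : (0 : ℝ) < #s := by exact_mod_cast hs.card_pos
  have hq : (0 : ℝ) < #t := by exact_mod_cast (hs.mono hst).card_pos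
  have hfrac : 0 ≤ 1 - (#s : ℝ) / #t :=
    sub_nonneg.2 ((div_le_one hq).2 (by exact_mod_cast card_le_card hst))
  have havg_s : |(∑ b ∈ s, a b) / #s| ≤ C := by
    rw [abs_div, abs_of_pos hp, div_le_iff₀ hp, mul_comm]
    exact abs_sum_le_card_mul fun b hb => ha b (hst hb)
  have hsum_rest : |∑ b ∈ t \ s, a b| ≤ (#t - #s) * C := by
    have := abs_sum_le_card_mul (s := t \ s) fun b hb => ha b (mem_sdiff.1 hb).1
    rwa [card_sdiff_of_subset hst, Nat.cast_sub (card_le_card hst)] at this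
  have hsplit : (∑ b ∈ s, a b) / #s - (∑ b ∈ t, a b) / #t
      = (1 - #s / #t) * ((∑ b ∈ s, a b) / #s) - (∑ b ∈ t \ s, a b) / #t := by
    rw [← sum_sdiff hst]
    field_simp
    ring
  calc _ ≤ |(1 - #s / #t) * ((∑ b ∈ s, a b) / #s)| + |(∑ b ∈ t \ s, a b) / #t| :=
        hsplit ▸ abs_sub _ _
    _ = (1 - #s / #t) * |(∑ b ∈ s, a b) / #s| + |∑ b ∈ t \ s, a b| / #t := by
        rw [abs_mul, abs_of_nonneg hfrac, abs_div (∑ b ∈ t \ s, a b), abs_of_pos hq]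
    _ ≤ (1 - #s / #t) * C + (#t - #s) * C / #t := by gcongr
    _ = 2 * C * (1 - #s / #t) := by field_simp; ring

theorem tendsto_card_embedding_div_pow (n : ℕ) :
    Tendsto (fun m : ℕ => (Fintype.card (Fin n ↪ Fin m) : ℝ) / (m : ℝ) ^ n) atTop (nhds 1) := by
  have hz : ∀ᶠ m : ℕ in atTop, (m : ℝ) ^ n ≠ 0 :=
    (eventually_gt_atTop 0).mono fun m hm => pow_ne_zero _ (by exact_mod_cast hm.ne')
  simpa [Fintype.card_embedding_eq, Pi.div_def] using
    (Asymptotics.isEquivalent_iff_tendsto_one hz).1 (isEquivalent_descFactorial n)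

section UStatistic

variable {X : Type*} [MeasurableSpace X] {ι κ : Type*} [Fintype ι] [Fintype κ]

noncomputable def uStatistic (f : (ι → X) → ℝ) (x : κ → X) : ℝ :=
  (∑ i : ι ↪ κ, f (fun k => x (i k))) / Fintype.card (ι ↪ κ)

theorem measurePreserving_comp_embedding (μ : Measure X) [IsProbabilityMeasure μ] (i : ι ↪ κ) :
    MeasurePreserving (fun (x : κ → X) k => x (i k))
      (Measure.pi fun _ => μ) (Measure.pi fun _ => μ) := by
  refine ⟨by fun_prop, (Measure.pi_eq fun s hs => ?_).symm⟩
  have hpre : (fun (x : κ → X) k => x (i k)) ⁻¹' Set.univ.pi s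
      = Set.univ.pi (Function.extend i s fun _ => Set.univ) := by
    ext x
    simp only [Set.mem_preimage, Set.mem_univ_pi]
    refine ⟨fun hx j => ?_, fun hx k => by simpa [i.injective.extend_apply] using hx (i k)⟩
    by_cases hj : ∃ k, i k = j
    · obtain ⟨k, rfl⟩ := hj
      simpa [i.injective.extend_apply] using hx k
    · simp [Function.extend_apply' _ _ _ hj]
  rw [Measure.map_apply (by fun_prop) (.univ_pi hs), hpre, Measure.pi_pi]
  -- coordinates outside the range of `i` contribute `μ univ = 1`
  exact (Fintype.prod_of_injective i i.injective _ _
    (fun j hj => by simp [Function.extend_apply' _ _ _ (by simpa using hj)])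
    (fun k => by simp [i.injective.extend_apply])).symm

/-- `(uniformOn univ).map x` is the empirical measure of the sample `x`. -/
theorem integral_pi_map_uniformOn [DecidableEq ι] [MeasurableSpace κ] [DiscreteMeasurableSpace κ]
    (x : κ → X) {f : (ι → X) → ℝ} (hf : Measurable f) :
    ∫ y, f y ∂(Measure.pi fun _ : ι => (uniformOn Set.univ).map x)
      = (∑ g : ι → κ, f (fun k => x (g k))) / Fintype.card κ ^ Fintype.card ι := by
  have hx : Measurable x := .of_discrete
  have hxg : Measurable fun (g : ι → κ) k => x (g k) :=
    measurable_pi_lambda _ fun k => hx.comp (measurable_pi_apply k)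
  rw [← Measure.pi_map_pi fun _ => hx.aemeasurable,
    integral_map hxg.aemeasurable hf.aestronglyMeasurable,
    ← uniformOn_pi (f := fun _ => Set.univ), Set.pi_univ]
  simp [uniformOn, ProbabilityTheory.cond, integral_smul_measure, inv_mul_eq_div]

variable {f : (ι → X) → ℝ} {C : ℝ}

theorem bddAbove_range_integral_pi (hbd : ∀ y, |f y| ≤ C) :
    BddAbove (Set.range fun μ : {μ : Measure X // IsProbabilityMeasure μ} =>
      ∫ y, f y ∂(Measure.pi fun _ : ι => (μ : Measure X))) := by
  refine ⟨C, ?_⟩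
  rintro _ ⟨⟨μ, _⟩, rfl⟩
  have h := norm_integral_le_of_norm_le_const (μ := Measure.pi fun _ : ι => μ) (f := f)
    (ae_of_all _ hbd)
  rw [probReal_univ, mul_one, Real.norm_eq_abs] at h
  exact le_of_abs_le h

theorem integral_pi_le_iSup_uStatistic [Nonempty (ι ↪ κ)] (μ : Measure X)
    [IsProbabilityMeasure μ] (hf : Measurable f) (hbd : ∀ y, |f y| ≤ C) :
    ∫ y, f y ∂(Measure.pi fun _ : ι => μ) ≤ ⨆ x : κ → X, uStatistic f x := by
  have hpres := measurePreserving_comp_embedding (ι := ι) (κ := κ) μ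
  have hint : ∀ i : ι ↪ κ, Integrable (fun x : κ → X => f (fun k => x (i k)))
      (Measure.pi fun _ => μ) := fun i =>
    .of_bound (hf.comp (hpres i).measurable).aestronglyMeasurable C (ae_of_all _ fun _ => hbd _)
  have hmean : ∫ x, uStatistic f x ∂(Measure.pi fun _ : κ => μ)
      = ∫ y, f y ∂(Measure.pi fun _ : ι => μ) := by
    have hterm : ∀ i : ι ↪ κ, ∫ x, f (fun k => x (i k)) ∂(Measure.pi fun _ : κ => μ)
        = ∫ y, f y ∂(Measure.pi fun _ : ι => μ) := fun i => by
      rw [← integral_map (hpres i).aemeasurable hf.aestronglyMeasurable, (hpres i).map_eq]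
    simp only [uStatistic, integral_div, integral_finsetSum _ fun i _ => hint i, hterm,
      sum_const, card_univ, nsmul_eq_mul]
    field_simp
  obtain ⟨x, hx⟩ := exists_integral_le ((integrable_finsetSum _ fun i _ => hint i).div_const
    (Fintype.card (ι ↪ κ) : ℝ))
  have hbdd : BddAbove (Set.range (uStatistic (κ := κ) f)) :=
    ⟨C, by rintro _ ⟨x, rfl⟩; exact sum_div_card_le univ_nonempty fun i _ => hbd _⟩
  exact hmean ▸ hx.trans (le_ciSup hbdd x)

theorem iSup_uStatistic_le [DecidableEq ι] [Nonempty X] [Nonempty κ] [Nonempty (ι ↪ κ)]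
    (hf : Measurable f) (hbd : ∀ y, |f y| ≤ C) :
    ⨆ x : κ → X, uStatistic f x
      ≤ (⨆ μ : {μ : Measure X // IsProbabilityMeasure μ},
          ∫ y, f y ∂(Measure.pi fun _ : ι => (μ : Measure X)))
        + 2 * C * (1 - Fintype.card (ι ↪ κ) / Fintype.card κ ^ Fintype.card ι) := by
  classical
  let _ : MeasurableSpace κ := ⊤
  have : DiscreteMeasurableSpace κ := ⟨fun _ => trivial⟩
  refine ciSup_le fun x => ?_
  have hempirical := le_ciSup (bddAbove_range_integral_pi hbd)
    ⟨(uniformOn Set.univ).map x,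
      Measure.isProbabilityMeasure_map (Measurable.of_discrete).aemeasurable⟩
  rw [integral_pi_map_uniformOn x hf] at hempirical
  have hcompare := abs_sum_div_card_sub_sum_div_card_le
    (s := (univ : Finset (ι ↪ κ)).map ⟨DFunLike.coe, DFunLike.coe_injective⟩)
    (t := (univ : Finset (ι → κ))) univ_nonempty.map (subset_univ _)
    (a := fun g => f fun k => x (g k)) (fun g _ => hbd _)
  rw [sum_map, card_map, card_univ, card_univ, Fintype.card_fun] at hcompare
  push_cast at hcompare
  exact sub_le_iff_le_add'.1 ((sub_le_sub_iff_left _).2 hempirical |>.trans (abs_le.1 hcompare).2)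

end UStatistic

/-- For bounded measurable f : Xⁿ → ℝ, the supremum over probability measures μ
of E_{μ⊗n}[f] equals the limit as m → ∞ of the supremum over x₁,...,x_m ∈ X of
the average of f(x_{i(1)},...,x_{i(n)}) over injections i : [n] ↪ [m]. -/
theorem stmt13 {X : Type*} [MeasurableSpace X] (n : ℕ)
    (f : (Fin n → X) → ℝ) (hf : Measurable f) (C : ℝ) (hbd : ∀ y, |f y| ≤ C) :
    Filter.Tendsto
      (fun m : ℕ => ⨆ x : Fin m → X,
        (∑ i : Fin n ↪ Fin m, f (fun k => x (i k))) / (Fintype.card (Fin n ↪ Fin m)))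
      Filter.atTop
      (nhds (⨆ μ : {μ : Measure X // IsProbabilityMeasure μ},
        ∫ y, f y ∂(Measure.pi fun _ : Fin n => (μ : Measure X)))) := by
  rcases isEmpty_or_nonempty X with _ | _
  · have : IsEmpty {μ : Measure X // IsProbabilityMeasure μ} :=
      ⟨fun ⟨μ, _⟩ => IsProbabilityMeasure.ne_zero μ (Measure.eq_zero_of_isEmpty μ)⟩
    rw [Real.iSup_of_isEmpty]
    refine tendsto_const_nhds.congr' ?_
    filter_upwards [eventually_gt_atTop 0] with m hm
    have : IsEmpty (Fin m → X) := ⟨fun x => isEmptyElim (x ⟨0, hm⟩)⟩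
    exact (Real.iSup_of_isEmpty _).symm
  have : Nonempty {μ : Measure X // IsProbabilityMeasure μ} :=
    ⟨⟨Measure.dirac (Classical.arbitrary X), inferInstance⟩⟩
  have hgap := ((tendsto_card_embedding_div_pow n).const_sub 1).const_mul (2 * C)
  refine tendsto_of_tendsto_of_tendsto_of_le_of_le' tendsto_const_nhds
    (by simpa using hgap.const_add _) ?_ ?_
  · filter_upwards [eventually_ge_atTop n] with m hnm
    have : Nonempty (Fin n ↪ Fin m) := ⟨Fin.castLEEmb hnm⟩
    exact ciSup_le fun ⟨μ, _⟩ => integral_pi_le_iSup_uStatistic μ hf hbd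
  · filter_upwards [eventually_ge_atTop n, eventually_gt_atTop 0] with m hnm hm
    have : Nonempty (Fin n ↪ Fin m) := ⟨Fin.castLEEmb hnm⟩
    have : Nonempty (Fin m) := ⟨⟨0, hm⟩⟩
    simpa [uStatistic] using iSup_uStatistic_le (κ := Fin m) hf hbd
end

section
/- Let c₁,...,cₙ ∈ ℝ and let X₁,...,Xₙ, U₁,...,Uₙ be nonnegative random variables such that (Xᵢ) and (Uᵢ) are independent families. For η > 0 set Yᵢ = Xᵢ + ηUᵢ. Then P(Σcᵢ Yᵢ > 0) converges, as η → 0, to P(Σcᵢ Xᵢ > 0) + P(Σcᵢ Xᵢ = 0)·P(Σcᵢ Uᵢ > 0). -/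
open MeasureTheory ProbabilityTheory

/-- Perturbation lemma: with (Xᵢ) and (Uᵢ) independent families of nonnegative
random variables and Yᵢ = Xᵢ + ηUᵢ, as η → 0⁺ the probability
P(Σcᵢ Yᵢ > 0) converges to P(Σcᵢ Xᵢ > 0) + P(Σcᵢ Xᵢ = 0)·P(Σcᵢ Uᵢ > 0). -/
theorem stmt14 {Ω : Type*} [MeasureSpace Ω] [IsProbabilityMeasure (ℙ : Measure Ω)]
    (n : ℕ) (c : Fin n → ℝ) (X U : Fin n → Ω → ℝ)
    (hXmeas : ∀ i, Measurable (X i)) (hUmeas : ∀ i, Measurable (U i))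
    (hXpos : ∀ i ω, 0 ≤ X i ω) (hUpos : ∀ i ω, 0 ≤ U i ω)
    (hindep : IndepFun (fun ω => fun i => X i ω) (fun ω => fun i => U i ω) ℙ) :
    Filter.Tendsto
      (fun η : ℝ =>
        (ℙ {ω | 0 < ∑ i, c i * (X i ω + η * U i ω)}).toReal)
      (nhdsWithin 0 (Set.Ioi 0))
      (nhds ((ℙ {ω | 0 < ∑ i, c i * X i ω}).toReal
        + (ℙ {ω | ∑ i, c i * X i ω = 0}).toReal
          * (ℙ {ω | 0 < ∑ i, c i * U i ω}).toReal)) := by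
  classical
  set S : Ω → ℝ := fun ω => ∑ i, c i * X i ω with hSdef
  set T : Ω → ℝ := fun ω => ∑ i, c i * U i ω with hTdef
  have hf : Measurable fun v : Fin n → ℝ => ∑ i, c i * v i :=
    Finset.measurable_sum _ fun i _ => (measurable_pi_apply i).const_mul _
  have hSmeas : Measurable S := hf.comp (measurable_pi_lambda _ hXmeas)
  have hTmeas : Measurable T := hf.comp (measurable_pi_lambda _ hUmeas)
  have hST : IndepFun S T ℙ := hindep.comp hf hf
  set B : Set Ω := {ω | 0 < S ω} ∪ ({ω | S ω = 0} ∩ {ω | 0 < T ω}) with hBdef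
  have hS0 : MeasurableSet {ω | S ω = 0} := hSmeas (measurableSet_singleton 0)
  have hSpos : MeasurableSet {ω | 0 < S ω} := measurableSet_lt measurable_const hSmeas
  have hTpos : MeasurableSet {ω | 0 < T ω} := measurableSet_lt measurable_const hTmeas
  have hBmeas : MeasurableSet B := hSpos.union (hS0.inter hTpos)
  -- rewrite the sets in the statement
  have hsum : ∀ η : ℝ, ∀ ω : Ω, ∑ i, c i * (X i ω + η * U i ω) = S ω + η * T ω := by
    intro η ω
    simp only [hSdef, hTdef, Finset.mul_sum, ← Finset.sum_add_distrib]
    congr 1; ext i; ring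
  have hmeasA : ∀ η : ℝ, MeasurableSet {ω | 0 < S ω + η * T ω} := fun η =>
    measurableSet_lt measurable_const (hSmeas.add (hTmeas.const_mul η))
  -- key convergence of measures
  have key : Filter.Tendsto (fun η : ℝ => ℙ {ω | 0 < S ω + η * T ω})
      (nhdsWithin 0 (Set.Ioi 0)) (nhds (ℙ B)) := by
    have hdom := tendsto_lintegral_filter_of_dominated_convergence
      (μ := (ℙ : Measure Ω)) (l := nhdsWithin (0:ℝ) (Set.Ioi 0))
      (F := fun η ω => Set.indicator {ω | 0 < S ω + η * T ω} (fun _ => (1:ENNReal)) ω)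
      (f := Set.indicator B (fun _ => (1:ENNReal)))
      (bound := fun _ => (1:ENNReal))
      (Filter.Eventually.of_forall fun η =>
        (measurable_one.indicator (hmeasA η)))
      (Filter.Eventually.of_forall fun η =>
        Filter.Eventually.of_forall fun ω => Set.indicator_apply_le fun _ => le_rfl)
      (by simp)
      (by
        refine Filter.Eventually.of_forall fun ω => ?_
        have hc : Filter.Tendsto (fun η : ℝ => S ω + η * T ω)
            (nhdsWithin 0 (Set.Ioi 0)) (nhds (S ω)) := by
          have hcont : Continuous fun η : ℝ => S ω + η * T ω := by continuity
          simpa using (hcont.tendsto 0).mono_left nhdsWithin_le_nhds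
        have hev : ∀ᶠ η in nhdsWithin (0:ℝ) (Set.Ioi 0),
            Set.indicator {ω | 0 < S ω + η * T ω} (fun _ => (1:ENNReal)) ω
              = Set.indicator B (fun _ => (1:ENNReal)) ω := by
          rcases lt_trichotomy (S ω) 0 with h | h | h
          · filter_upwards [hc.eventually_lt_const h] with η hη
            have hωA : ω ∉ {ω | 0 < S ω + η * T ω} := by
              simp only [Set.mem_setOf_eq]; linarith
            have hωB : ω ∉ B := by
              simp only [hBdef, Set.mem_union, Set.mem_inter_iff, Set.mem_setOf_eq]
              push_neg
              constructor
              · linarith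
              · intro h0; exact absurd h0 (ne_of_lt h)
            simp [Set.indicator_of_notMem, hωA, hωB]
          · filter_upwards [self_mem_nhdsWithin] with η (hη : (0:ℝ) < η)
            have : (0 < S ω + η * T ω) ↔ (0 < T ω) := by
              rw [h, zero_add]
              exact mul_pos_iff_of_pos_left hη
            by_cases ht : 0 < T ω
            · have hωA : ω ∈ {ω | 0 < S ω + η * T ω} := this.mpr ht
              have hωB : ω ∈ B := Or.inr ⟨h, ht⟩
              simp [Set.indicator_of_mem, hωA, hωB]
            · have hωA : ω ∉ {ω | 0 < S ω + η * T ω} := fun hx => ht (this.mp hx)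
              have hωB : ω ∉ B := by
                rintro (h1 | ⟨_, h2⟩)
                · exact absurd (Set.mem_setOf_eq ▸ h1) (by rw [h]; exact lt_irrefl 0)
                · exact ht h2
              simp [Set.indicator_of_notMem, hωA, hωB]
          · filter_upwards [hc.eventually_const_lt h] with η hη
            have hωA : ω ∈ {ω | 0 < S ω + η * T ω} := hη
            have hωB : ω ∈ B := Or.inl h
            simp [Set.indicator_of_mem, hωA, hωB]
        exact Filter.Tendsto.congr' (hev.mono fun η h => h.symm) tendsto_const_nhds)
    have h1 : ∀ η : ℝ, ∫⁻ ω, Set.indicator {ω | 0 < S ω + η * T ω} (fun _ => (1:ENNReal)) ω ∂ℙ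
        = ℙ {ω | 0 < S ω + η * T ω} := fun η => by
      rw [lintegral_indicator (hmeasA η)]; simp
    have h2 : ∫⁻ ω, Set.indicator B (fun _ => (1:ENNReal)) ω ∂ℙ = ℙ B := by
      rw [lintegral_indicator hBmeas]; simp
    rw [h2] at hdom
    exact hdom.congr fun η => h1 η
  -- compute ℙ B
  have hdisj : Disjoint {ω | 0 < S ω} ({ω | S ω = 0} ∩ {ω | 0 < T ω}) := by
    rw [Set.disjoint_left]
    rintro ω h1 ⟨h2, _⟩
    exact absurd h2 (ne_of_gt h1)
  have hBmeasure : ℙ B = ℙ {ω | 0 < S ω} + ℙ {ω | S ω = 0} * ℙ {ω | 0 < T ω} := by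
    rw [hBdef, measure_union hdisj (hS0.inter hTpos)]
    congr 1
    have := hST.measure_inter_preimage_eq_mul {(0:ℝ)} (Set.Ioi 0)
      (measurableSet_singleton 0) measurableSet_Ioi
    simpa [Set.preimage, Set.mem_Ioi] using this
  -- finish
  have hfin : ℙ B ≠ ⊤ := measure_ne_top _ _
  have := (ENNReal.tendsto_toReal hfin).comp key
  have heq : ((ℙ B).toReal)
      = (ℙ {ω | 0 < S ω}).toReal + (ℙ {ω | S ω = 0}).toReal * (ℙ {ω | 0 < T ω}).toReal := by
    rw [hBmeasure, ENNReal.toReal_add (measure_ne_top _ _)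
      (ENNReal.mul_ne_top (measure_ne_top _ _) (measure_ne_top _ _)), ENNReal.toReal_mul]
  rw [heq] at this
  have hset : ∀ η : ℝ, {ω | 0 < ∑ i, c i * (X i ω + η * U i ω)} = {ω | 0 < S ω + η * T ω} :=
    fun η => by ext ω; rw [Set.mem_setOf_eq, Set.mem_setOf_eq, hsum η ω]
  refine this.congr fun η => ?_
  simp only [Function.comp_apply, hset]
end

section
/- Let μ be a finitely supported probability measure on ℝ₊, c₁,...,cₙ ∈ ℝ, p = P_{μ⊗n}(Σcᵢ Xᵢ > 0) and q = P_{μ⊗n}(Σcᵢ Xᵢ = 0) with q < 1. Then there exists a probability measure ν on [0,1] with P_{ν⊗n}(Σcᵢ Xᵢ > 0) ≥ p/(1-q) exactly (ε = 0). -/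
/-!
Take for ν the law of `β ∑ⱼ ηʲ Xⱼ` with `(Xⱼ)` i.i.d. of law `μ`, where `β` rescales into `[0, 1]`
and `η` is so small that every nonzero value `t` of `∑ᵢ cᵢ xᵢ` on atoms satisfies
`η C < (1 - η) |t|`, `C` bounding all such values. For `n` independent copies `Yᵢ`,
`∑ᵢ cᵢ Yᵢ = β ∑ⱼ ηʲ Tⱼ` with `Tⱼ = ∑ᵢ cᵢ X_{i,j}` i.i.d. in `j`, so its sign is the sign of the
first nonzero `Tⱼ`, which is positive with probability `∑ₖ qᵏ p = p / (1 - q)`.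
-/

open MeasureTheory Set Finset

section GeometricSeries

variable {η C : ℝ} {t : ℕ → ℝ}

lemma hasSum_pow_mul_const (hη0 : 0 ≤ η) (hη1 : η < 1) :
    HasSum (fun j => η ^ j * C) ((1 - η)⁻¹ * C) :=
  (hasSum_geometric_of_lt_one hη0 hη1).mul_right C

lemma norm_pow_mul_le (hη0 : 0 ≤ η) (ht : ∀ j, |t j| ≤ C) (j : ℕ) :
    ‖η ^ j * t j‖ ≤ η ^ j * C := by
  rw [Real.norm_eq_abs, abs_mul, abs_pow, abs_of_nonneg hη0]
  exact mul_le_mul_of_nonneg_left (ht j) (by positivity)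

lemma summable_pow_mul_of_abs_le (hη0 : 0 ≤ η) (hη1 : η < 1) (ht : ∀ j, |t j| ≤ C) :
    Summable fun j => η ^ j * t j :=
  (hasSum_pow_mul_const hη0 hη1).summable.of_norm_bounded (norm_pow_mul_le hη0 ht)

lemma abs_tsum_pow_mul_le (hη0 : 0 ≤ η) (hη1 : η < 1) (ht : ∀ j, |t j| ≤ C) :
    |∑' j, η ^ j * t j| ≤ (1 - η)⁻¹ * C :=
  tsum_of_norm_bounded (hasSum_pow_mul_const hη0 hη1) (norm_pow_mul_le hη0 ht)

lemma tsum_pow_mul_pos_iff_of_dominant_head (hη0 : 0 < η) (hη1 : η < 1)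
    (ht : ∀ j, |t j| ≤ C) (hdom : η * C < (1 - η) * |t 0|) :
    0 < ∑' j, η ^ j * t j ↔ 0 < t 0 := by
  have htail : |∑' j, η ^ (j + 1) * t (j + 1)| < |t 0| := by
    have hbound := abs_tsum_pow_mul_le hη0.le hη1 fun j => ht (j + 1)
    simp_rw [pow_succ, mul_comm _ η, mul_assoc, tsum_mul_left, abs_mul, abs_of_pos hη0]
    calc η * |∑' j, η ^ j * t (j + 1)| ≤ η * ((1 - η)⁻¹ * C) := by gcongr
      _ < |t 0| := by
        rw [← mul_assoc, mul_comm η, mul_assoc, inv_mul_lt_iff₀ (by linarith)]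
        exact hdom
  rw [(summable_pow_mul_of_abs_le hη0.le hη1 ht).tsum_eq_zero_add, pow_zero, one_mul]
  rcases abs_cases (t 0) with ⟨h0, -⟩ | ⟨h0, -⟩ <;> rw [h0] at htail <;>
    have := abs_lt.1 htail <;> constructor <;> intro <;> linarith

lemma tsum_pow_mul_pos_iff (hη0 : 0 < η) (hη1 : η < 1) (ht : ∀ j, |t j| ≤ C)
    (hgap : ∀ j, t j ≠ 0 → η * C < (1 - η) * |t j|) :
    0 < ∑' j, η ^ j * t j ↔ ∃ k, (∀ j < k, t j = 0) ∧ 0 < t k := by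
  classical
  by_cases hne : ∃ j, t j ≠ 0
  · set k := Nat.find hne
    have hzero : ∀ j < k, t j = 0 := fun j hj => not_not.1 (Nat.find_min hne hj)
    have hshift : ∑' j, η ^ j * t j = η ^ k * ∑' j, η ^ j * t (j + k) := by
      rw [← (summable_pow_mul_of_abs_le hη0.le hη1 ht).sum_add_tsum_nat_add k,
        sum_eq_zero fun j hj => by rw [hzero j (mem_range.1 hj), mul_zero],
        zero_add, ← tsum_mul_left]
      exact tsum_congr fun j => by ring
    rw [hshift, mul_pos_iff_of_pos_left (pow_pos hη0 k),
      tsum_pow_mul_pos_iff_of_dominant_head hη0 hη1 (fun j => ht _)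
        (by simpa using hgap k (Nat.find_spec hne)), zero_add]
    refine ⟨fun hk => ⟨k, hzero, hk⟩, fun ⟨l, hl, hpos⟩ => ?_⟩
    obtain rfl : l = k := le_antisymm (not_lt.1 fun hkl => Nat.find_spec hne (hl k hkl))
      (Nat.find_min' hne hpos.ne')
    exact hpos
  · simp only [ne_eq, not_exists, not_not] at hne
    simp [hne]

end GeometricSeries

namespace MeasureTheory.Measure

lemma infinitePi_map_swap {ι κ X : Type*} [MeasurableSpace X] (μ : Measure X)
    [IsProbabilityMeasure μ] :
    (infinitePi fun _ : ι => infinitePi fun _ : κ => μ).map Function.swap =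
      infinitePi fun _ : κ => infinitePi fun _ : ι => μ := by
  have hswap : (Function.swap : (ι → κ → X) → κ → ι → X) =
      MeasurableEquiv.curry κ ι X ∘
        MeasurableEquiv.piCongrLeft (fun _ => X) (Equiv.prodComm ι κ) ∘
          (MeasurableEquiv.curry ι κ X).symm := by
    ext; simp [MeasurableEquiv.piCongrLeft, Equiv.piCongrLeft]
  rw [hswap, ← map_map (by fun_prop) (by fun_prop), ← map_map (by fun_prop) (by fun_prop),
    infinitePi_map_curry_symm (fun (_ : ι) (_ : κ) => μ),
    infinitePi_map_piCongrLeft (fun _ : κ × ι => μ) (Equiv.prodComm ι κ)]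
  exact infinitePi_map_curry (fun (_ : κ) (_ : ι) => μ)

lemma infinitePi_exists_first_mem {E : Type*} [MeasurableSpace E] (P : Measure E)
    [IsProbabilityMeasure P] {Z S : Set E} (hZ : MeasurableSet Z) (hS : MeasurableSet S)
    (hZS : Disjoint Z S) :
    infinitePi (fun _ : ℕ => P) {ω | ∃ k, (∀ j < k, ω j ∈ Z) ∧ ω k ∈ S} =
      (1 - P Z)⁻¹ * P S := by
  set piece : ℕ → Set (ℕ → E) := fun k =>
    (↑(range (k + 1)) : Set ℕ).pi fun j => if j < k then Z else S
  have hpiece : ∀ k, piece k = {ω | (∀ j < k, ω j ∈ Z) ∧ ω k ∈ S} := by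
    intro k
    ext ω
    simp only [piece, Set.mem_pi, coe_range, Set.mem_Iio, Nat.lt_succ_iff, Set.mem_ofPred_eq]
    refine ⟨fun h => ⟨fun j hj => ?_, ?_⟩, fun ⟨hZ, hS⟩ j hj => ?_⟩
    · simpa [hj] using h j hj.le
    · simpa using h k le_rfl
    · rcases Nat.lt_or_eq_of_le hj with hj | rfl
      · simpa [hj] using hZ j hj
      · simpa using hS
  have hunion : {ω : ℕ → E | ∃ k, (∀ j < k, ω j ∈ Z) ∧ ω k ∈ S} = ⋃ k, piece k := by
    ext ω; simp [hpiece]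
  have hdisj : Pairwise (Function.onFun Disjoint piece) := by
    refine (pairwise_disjoint_on piece).2 fun k l hkl => Set.disjoint_left.2 fun ω hk hl => ?_
    rw [hpiece] at hk hl
    exact hZS.notMem_of_mem_left (hl.1 k hkl) hk.2
  have hmeas : ∀ k, MeasurableSet (piece k) := fun k =>
    .pi (Set.to_countable _) fun j _ => by split_ifs <;> assumption
  have hprob : ∀ k, infinitePi (fun _ : ℕ => P) (piece k) = P Z ^ k * P S := by
    intro k
    rw [infinitePi_pi _ fun j _ => by split_ifs <;> assumption, prod_range_succ,
      prod_congr rfl fun j hj => by rw [if_pos (mem_range.1 hj)], prod_const, card_range,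
      if_neg (lt_irrefl k)]
  rw [hunion, measure_iUnion hdisj hmeas]
  simp_rw [hprob, ENNReal.tsum_mul_right, ENNReal.tsum_geometric]

end MeasureTheory.Measure

lemma abs_sum_mul_le {n : ℕ} (c x : Fin n → ℝ) {M : ℝ} (hx : ∀ i, |x i| ≤ M) :
    |∑ i, c i * x i| ≤ (∑ i, |c i|) * M := by
  calc |∑ i, c i * x i| ≤ ∑ i, |c i| * |x i| := by
        simpa only [abs_mul] using abs_sum_le_sum_abs (fun i => c i * x i) univ
    _ ≤ ∑ i, |c i| * M := by gcongr; exact hx _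
    _ = (∑ i, |c i|) * M := (sum_mul _ _ _).symm

section GeomSeriesLaw

variable (μ : Measure ℝ) (β η : ℝ)

noncomputable def geomSeriesLaw : Measure ℝ :=
  (Measure.infinitePi fun _ : ℕ => μ).map fun ω => β * ∑' j, η ^ j * ω j

lemma measurable_const_mul_tsum_pow_mul :
    Measurable fun ω : ℕ → ℝ => β * ∑' j, η ^ j * ω j :=
  (Measurable.tsum fun j => (measurable_pi_apply j).const_mul _).const_mul β

variable [IsProbabilityMeasure μ]

instance isProbabilityMeasure_geomSeriesLaw : IsProbabilityMeasure (geomSeriesLaw μ β η) :=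
  Measure.isProbabilityMeasure_map (measurable_const_mul_tsum_pow_mul β η).aemeasurable

variable {μ β η}

lemma geomSeriesLaw_compl_Icc {M : ℝ} (hβ : 0 ≤ β) (hη0 : 0 ≤ η) (hη1 : η < 1)
    (hβM : β * M ≤ 1 - η) (hμ : ∀ᵐ x ∂μ, x ∈ Icc 0 M) :
    geomSeriesLaw μ β η (Icc 0 1)ᶜ = 0 := by
  have hae : ∀ᵐ ω ∂(Measure.infinitePi fun _ : ℕ => μ), ∀ j, ω j ∈ Icc 0 M :=
    ae_all_iff.2 fun j => (measurePreserving_eval_infinitePi _ j).quasiMeasurePreserving.ae hμ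
  rw [geomSeriesLaw, Measure.map_apply (measurable_const_mul_tsum_pow_mul β η)
    measurableSet_Icc.compl]
  refine measure_mono_null (fun ω hω => ?_) (ae_iff.1 hae)
  intro hall
  apply hω
  have hnonneg : 0 ≤ ∑' j, η ^ j * ω j :=
    tsum_nonneg fun j => mul_nonneg (pow_nonneg hη0 j) (hall j).1
  have hle : ∑' j, η ^ j * ω j ≤ (1 - η)⁻¹ * M :=
    (le_abs_self _).trans <| abs_tsum_pow_mul_le hη0 hη1 fun j =>
      abs_le.2 ⟨by linarith [(hall j).1, (hall j).2], (hall j).2⟩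
  refine ⟨mul_nonneg hβ hnonneg, ?_⟩
  calc β * ∑' j, η ^ j * ω j ≤ β * ((1 - η)⁻¹ * M) := by gcongr
    _ = (1 - η)⁻¹ * (β * M) := by ring
    _ ≤ 1 := by rw [inv_mul_le_iff₀ (by linarith)]; linarith

lemma pi_geomSeriesLaw_eq_map {n : ℕ} :
    (Measure.pi fun _ : Fin n => geomSeriesLaw μ β η) =
      (Measure.infinitePi fun _ : ℕ => Measure.pi fun _ : Fin n => μ).map
        fun Ω i => β * ∑' j, η ^ j * Ω j i := by
  rw [geomSeriesLaw, ← Measure.pi_map_pi fun _ =>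
      (measurable_const_mul_tsum_pow_mul β η).aemeasurable,
    ← Measure.infinitePi_eq_pi, ← Measure.infinitePi_eq_pi,
    ← Measure.infinitePi_map_swap μ, Measure.map_map (by fun_prop) (by fun_prop)]
  rfl

lemma pi_geomSeriesLaw_sum_pos {n : ℕ} (c : Fin n → ℝ) {M δ : ℝ} (hβ : 0 < β) (hη0 : 0 < η)
    (hη1 : η < 1) (hμ : ∀ᵐ x ∂μ, |x| ≤ M)
    (hgap : ∀ᵐ x ∂(Measure.pi fun _ : Fin n => μ), ∑ i, c i * x i ≠ 0 → δ ≤ |∑ i, c i * x i|)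
    (hηδ : η * ((∑ i, |c i|) * M) < (1 - η) * δ) :
    (Measure.pi fun _ : Fin n => geomSeriesLaw μ β η) {x | 0 < ∑ i, c i * x i} =
      (1 - (Measure.pi fun _ : Fin n => μ) {x | ∑ i, c i * x i = 0})⁻¹ *
        (Measure.pi fun _ : Fin n => μ) {x | 0 < ∑ i, c i * x i} := by
  set P := Measure.pi fun _ : Fin n => μ
  set L : (Fin n → ℝ) → ℝ := fun x => ∑ i, c i * x i
  have hL : Measurable L := by fun_prop
  have hgood : ∀ᵐ x ∂P, (∀ i, |x i| ≤ M) ∧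
      (L x ≠ 0 → η * ((∑ i, |c i|) * M) < (1 - η) * |L x|) :=
    (ae_all_iff.2 fun i => (measurePreserving_eval _ i).quasiMeasurePreserving.ae hμ).and <|
      hgap.mono fun x hx hne => hηδ.trans_le (mul_le_mul_of_nonneg_left (hx hne) (by linarith))
  have hae : ∀ᵐ Ω ∂(Measure.infinitePi fun _ : ℕ => P), ∀ j, (∀ i, |Ω j i| ≤ M) ∧
      (L (Ω j) ≠ 0 → η * ((∑ i, |c i|) * M) < (1 - η) * |L (Ω j)|) :=
    ae_all_iff.2 fun j =>
      (measurePreserving_eval_infinitePi (fun _ : ℕ => P) j).quasiMeasurePreserving.ae hgood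
  have hsign : ∀ Ω : ℕ → Fin n → ℝ, (∀ j, (∀ i, |Ω j i| ≤ M) ∧
      (L (Ω j) ≠ 0 → η * ((∑ i, |c i|) * M) < (1 - η) * |L (Ω j)|)) →
      (0 < L (fun i => β * ∑' j, η ^ j * Ω j i) ↔
        ∃ k, (∀ j < k, Ω j ∈ L ⁻¹' {0}) ∧ Ω k ∈ L ⁻¹' Ioi 0) := by
    intro Ω hΩ
    have hexchange : (L fun i => β * ∑' j, η ^ j * Ω j i) = β * ∑' j, η ^ j * L (Ω j) := by
      have hterm : ∀ i, c i * (β * ∑' j, η ^ j * Ω j i) = ∑' j, β * c i * (η ^ j * Ω j i) :=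
        fun i => by rw [tsum_mul_left]; ring
      simp only [L, hterm]
      rw [← Summable.tsum_finsetSum fun i _ =>
        (summable_pow_mul_of_abs_le hη0.le hη1 fun j => (hΩ j).1 i).mul_left (β * c i),
        ← tsum_mul_left]
      exact tsum_congr fun j => by simp only [mul_sum]; exact sum_congr rfl fun i _ => by ring
    rw [hexchange, mul_pos_iff_of_pos_left hβ,
      tsum_pow_mul_pos_iff hη0 hη1 (fun j => abs_sum_mul_le c _ (hΩ j).1) fun j => (hΩ j).2]
    rfl
  rw [pi_geomSeriesLaw_eq_map, Measure.map_apply (by fun_prop) (measurableSet_lt (by fun_prop) hL)]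
  calc _ = Measure.infinitePi (fun _ : ℕ => P)
          {Ω | ∃ k, (∀ j < k, Ω j ∈ L ⁻¹' {0}) ∧ Ω k ∈ L ⁻¹' Ioi 0} :=
        measure_congr (hae.mono fun Ω hΩ => propext (hsign Ω hΩ))
    _ = _ := Measure.infinitePi_exists_first_mem P (hL (measurableSet_singleton 0))
        (hL measurableSet_Ioi)
        (Set.disjoint_left.2 fun x h0 hpos => (ne_of_gt (Set.mem_Ioi.1 hpos)) h0)

end GeomSeriesLaw

lemma Finset.exists_pos_le_abs_of_ne_zero (F : Finset ℝ) :
    ∃ δ > 0, ∀ x ∈ F, x ≠ 0 → δ ≤ |x| := by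
  by_cases h : (F.filter (· ≠ 0)).Nonempty
  · obtain ⟨y, hy, hmin⟩ := exists_min_image _ (fun x => |x|) h
    exact ⟨|y|, abs_pos.2 (mem_filter.1 hy).2, fun x hx hx0 => hmin x (mem_filter.2 ⟨hx, hx0⟩)⟩
  · exact ⟨1, one_pos, fun x hx hx0 => absurd ⟨x, mem_filter.2 ⟨hx, hx0⟩⟩ h⟩

lemma exists_pos_ae_pi_le_abs_sum_mul {n : ℕ} (c : Fin n → ℝ) (μ : Measure ℝ)
    [IsProbabilityMeasure μ] {s : Finset ℝ} (hs : ∀ᵐ x ∂μ, x ∈ s) :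
    ∃ δ > 0, ∀ᵐ x ∂(Measure.pi fun _ : Fin n => μ),
      ∑ i, c i * x i ≠ 0 → δ ≤ |∑ i, c i * x i| := by
  obtain ⟨δ, hδ, hle⟩ :=
    ((Fintype.piFinset fun _ : Fin n => s).image fun x =>
      ∑ i, c i * x i).exists_pos_le_abs_of_ne_zero
  refine ⟨δ, hδ, ?_⟩
  filter_upwards [ae_all_iff.2 fun i => (measurePreserving_eval _ i).quasiMeasurePreserving.ae hs]
    with x hx
  exact hle _ (mem_image_of_mem _ (Fintype.mem_piFinset.2 hx))

lemma exists_pos_lt_one_mul_lt_one_sub_mul {C δ : ℝ} (hC : 0 ≤ C) (hδ : 0 < δ) :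
    ∃ η, 0 < η ∧ η < 1 ∧ η * C < (1 - η) * δ := by
  refine ⟨δ / (2 * (C + δ)), by positivity, ?_, ?_⟩
  · rw [div_lt_one (by positivity)]; linarith
  · have : δ / (2 * (C + δ)) * (C + δ) = δ / 2 := by field_simp
    nlinarith

theorem stmt16_general (n : ℕ) (c : Fin n → ℝ)
    (μ : Measure ℝ) [IsProbabilityMeasure μ] (hμpos : μ (Set.Iio 0) = 0)
    (s : Finset ℝ) (hsupp : μ (↑s : Set ℝ)ᶜ = 0)
    (p q : ℝ)
    (hp : p = ((Measure.pi fun _ : Fin n => μ) {x | 0 < ∑ i, c i * x i}).toReal)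
    (hq : q = ((Measure.pi fun _ : Fin n => μ) {x | ∑ i, c i * x i = 0}).toReal) :
    ∃ ν : Measure ℝ, IsProbabilityMeasure ν ∧ ν (Set.Icc 0 1)ᶜ = 0 ∧
      p / (1 - q) ≤
        ((Measure.pi fun _ : Fin n => ν) {x | 0 < ∑ i, c i * x i}).toReal := by
  have hμs : ∀ᵐ x ∂μ, x ∈ s := ae_iff.2 hsupp
  have hμnonneg : ∀ᵐ x ∂μ, 0 ≤ x := ae_iff.2 (by simp only [not_le]; exact hμpos)
  set M := ∑ a ∈ s, |a| + 1
  have hM : 0 < M := by positivity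
  have hμM : ∀ᵐ x ∂μ, x ∈ Icc 0 M := by
    filter_upwards [hμs, hμnonneg] with x hxs hx0
    exact ⟨hx0, by linarith [abs_of_nonneg hx0, single_le_sum (fun a _ => abs_nonneg a) hxs]⟩
  obtain ⟨δ, hδ, hgap⟩ := exists_pos_ae_pi_le_abs_sum_mul c μ hμs
  obtain ⟨η, hη0, hη1, hηδ⟩ := exists_pos_lt_one_mul_lt_one_sub_mul
    (mul_nonneg (sum_nonneg fun i _ => abs_nonneg (c i)) hM.le) hδ
  set β := (1 - η) / M
  have hβ : 0 < β := div_pos (by linarith) hM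
  have hβM : β * M = 1 - η := div_mul_cancel₀ _ hM.ne'
  refine ⟨geomSeriesLaw μ β η, inferInstance,
    geomSeriesLaw_compl_Icc hβ.le hη0.le hη1 hβM.le hμM, ?_⟩
  rw [pi_geomSeriesLaw_sum_pos c hβ hη0 hη1
      (hμM.mono fun x hx => abs_le.2 ⟨by linarith [hx.1], hx.2⟩) hgap hηδ,
    ENNReal.toReal_mul, ENNReal.toReal_inv, ENNReal.toReal_sub_of_le prob_le_one
    ENNReal.one_ne_top, ENNReal.toReal_one, ← hp, ← hq, div_eq_inv_mul]

/-- Amplification, exact version: if μ is a finitely supported probability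
measure on ℝ₊ with p = P_{μ⊗n}(Σcᵢ Xᵢ > 0) and q = P_{μ⊗n}(Σcᵢ Xᵢ = 0) < 1,
then there is a probability measure ν on [0,1] with
P_{ν⊗n}(Σcᵢ Xᵢ > 0) ≥ p/(1-q). -/
theorem stmt16 (n : ℕ) (c : Fin n → ℝ)
    (μ : Measure ℝ) [IsProbabilityMeasure μ] (hμpos : μ (Set.Iio 0) = 0)
    (s : Finset ℝ) (hsupp : μ (↑s : Set ℝ)ᶜ = 0)
    (p q : ℝ)
    (hp : p = ((Measure.pi fun _ : Fin n => μ) {x | 0 < ∑ i, c i * x i}).toReal)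
    (hq : q = ((Measure.pi fun _ : Fin n => μ) {x | ∑ i, c i * x i = 0}).toReal)
    (hq1 : q < 1) :
    ∃ ν : Measure ℝ, IsProbabilityMeasure ν ∧ ν (Set.Icc 0 1)ᶜ = 0 ∧
      p / (1 - q) ≤
        ((Measure.pi fun _ : Fin n => ν) {x | 0 < ∑ i, c i * x i}).toReal :=
  stmt16_general n c μ hμpos s hsupp p q hp hq
end

section
/- Let m = 4 and consider the four inequalities X_i + X_j + X_k < 2X_ℓ for {i,j,k,ℓ} = {1,2,3,4} with ℓ ranging over the four positions. For any nonnegative reals X₁ ≤ X₂ ≤ X₃ ≤ X₄, at most 2 of these four inequalities hold simultaneously, and the assignment X₁ = X₂ = 0, X₃ = X₄ = 1 satisfies exactly 2 of them. Consequently, for any probability measure μ on ℝ₊ and X₁,...,X₄ iid with law μ, P(X₁ + X₂ + X₃ < 2X₄) ≤ 1/2. -/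
open MeasureTheory
open scoped ENNReal

/-- For m = 4 and the four versions X_i + X_j + X_k < 2X_ℓ of the inequality:
for nonnegative monotone reals X₁ ≤ X₂ ≤ X₃ ≤ X₄ at most 2 of the four hold;
the assignment X₁ = X₂ = 0, X₃ = X₄ = 1 satisfies exactly 2 of them; and
consequently for X₁,...,X₄ iid with law any probability measure μ on ℝ₊,
P(X₁ + X₂ + X₃ < 2X₄) ≤ 1/2. -/
theorem stmt19 :
    (∀ X : Fin 4 → ℝ, (∀ i, 0 ≤ X i) → Monotone X →
      (Finset.univ.filter
        (fun ℓ : Fin 4 => ∑ i ∈ Finset.univ.erase ℓ, X i < 2 * X ℓ)).card ≤ 2) ∧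
    (Finset.univ.filter
      (fun ℓ : Fin 4 => ∑ i ∈ Finset.univ.erase ℓ, (![0, 0, 1, 1] : Fin 4 → ℝ) i
        < 2 * (![0, 0, 1, 1] : Fin 4 → ℝ) ℓ)).card = 2 ∧
    (∀ μ : Measure ℝ, IsProbabilityMeasure μ → μ (Set.Iio 0) = 0 →
      (Measure.pi fun _ : Fin 4 => μ) {x | x 0 + x 1 + x 2 < 2 * x 3} ≤ 1 / 2) := by
  refine ⟨?_, ?_, ?_⟩
  · intro X h0 hm
    have h01 : X 0 ≤ X 1 := hm (by decide)
    have h12 : X 1 ≤ X 2 := hm (by decide)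
    have h23 : X 2 ≤ X 3 := hm (by decide)
    have hsub : (Finset.univ.filter
          (fun ℓ : Fin 4 => ∑ i ∈ Finset.univ.erase ℓ, X i < 2 * X ℓ)) ⊆ {2, 3} := by
      intro ℓ hℓ
      simp only [Finset.mem_filter, Finset.mem_univ, true_and] at hℓ
      fin_cases ℓ
      · exfalso
        simp [Finset.sum_erase_eq_sub, Fin.sum_univ_four] at hℓ
        have := h0 0
        linarith
      · exfalso
        simp [Finset.sum_erase_eq_sub, Fin.sum_univ_four] at hℓ
        have := h0 0
        linarith
      · simp
      · simp
    calc _ ≤ ({2,3} : Finset (Fin 4)).card := Finset.card_le_card hsub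
      _ ≤ 2 := by decide
  · have heq : (Finset.univ.filter
        (fun ℓ : Fin 4 => ∑ i ∈ Finset.univ.erase ℓ, (![0, 0, 1, 1] : Fin 4 → ℝ) i
          < 2 * (![0, 0, 1, 1] : Fin 4 → ℝ) ℓ)) = {2, 3} := by
      ext ℓ
      fin_cases ℓ <;>
        simp [Finset.sum_erase_eq_sub, Fin.sum_univ_four]
    rw [heq]; decide
  · intro μ hp hneg
    set ν : Measure (Fin 4 → ℝ) := Measure.pi fun _ : Fin 4 => μ with hν
    have : IsProbabilityMeasure ν := by rw [hν]; infer_instance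
    -- the four events
    set A : Fin 4 → Set (Fin 4 → ℝ) := fun ℓ => {x | ∑ i, x i < 3 * x ℓ} with hA
    have hAmeas : ∀ ℓ, MeasurableSet (A ℓ) := fun ℓ =>
      measurableSet_lt (by fun_prop) (by fun_prop)
    -- target set is A 3
    have htarget : {x : Fin 4 → ℝ | x 0 + x 1 + x 2 < 2 * x 3} = A 3 := by
      ext x
      simp only [hA, Set.mem_setOf_eq, Fin.sum_univ_four]
      constructor <;> intro h <;> linarith
    -- exchangeability : ν (A ℓ) = ν (A 3)
    have hexch : ∀ ℓ : Fin 4, ν (A ℓ) = ν (A 3) := by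
      intro ℓ
      have hmp := measurePreserving_piCongrLeft (fun _ : Fin 4 => μ) (Equiv.swap ℓ 3)
      have := hmp.measure_preimage (hAmeas 3).nullMeasurableSet
      rw [← this]
      congr 1
      ext x
      simp only [Set.mem_preimage, hA, Set.mem_setOf_eq]
      have happ : ∀ j : Fin 4,
          (MeasurableEquiv.piCongrLeft (fun _ : Fin 4 => ℝ) (Equiv.swap ℓ 3)) x j
            = x (Equiv.swap ℓ 3 j) := by
        intro j
        rw [MeasurableEquiv.coe_piCongrLeft]
        have h := Equiv.piCongrLeft_apply_apply (fun _ : Fin 4 => ℝ) (Equiv.swap ℓ 3) x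
          (Equiv.swap ℓ 3 j)
        rwa [Equiv.swap_apply_self] at h
      rw [Finset.sum_congr rfl (fun j _ => happ j), happ 3,
        Equiv.sum_comp (Equiv.swap ℓ 3) x, Equiv.swap_apply_right]
    -- the nonnegativity set has full measure
    set S : Set (Fin 4 → ℝ) := {x | ∀ i, 0 ≤ x i} with hS
    have hSmeas : MeasurableSet S := by
      have : S = ⋂ i, (fun x : Fin 4 → ℝ => x i) ⁻¹' (Set.Ici 0) := by
        ext x; simp [hS]
      rw [this]
      exact MeasurableSet.iInter fun i => (measurable_pi_apply i) measurableSet_Ici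
    have hScompl : ν Sᶜ = 0 := by
      have hsub : Sᶜ ⊆ ⋃ i : Fin 4, Function.eval i ⁻¹' (Set.Iio 0) := by
        intro x hx
        simp only [hS, Set.mem_compl_iff, Set.mem_setOf_eq, not_forall] at hx
        obtain ⟨i, hi⟩ := hx
        exact Set.mem_iUnion.2 ⟨i, by simpa [Function.eval] using lt_of_not_ge hi⟩
      refine measure_mono_null hsub (measure_iUnion_null fun i => ?_)
      exact Measure.pi_eval_preimage_null (fun _ : Fin 4 => μ) hneg
    have hAS : ∀ ℓ, ν (A ℓ) = ν (A ℓ ∩ S) := fun ℓ =>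
      (measure_inter_conull hScompl).symm
    -- at most two events hold on S
    have hcount : ∀ x, (∑ ℓ : Fin 4, (A ℓ ∩ S).indicator (1 : (Fin 4 → ℝ) → ℝ≥0∞) x) ≤ 2 := by
      intro x
      by_cases hxS : x ∈ S
      · have hnot3 : ∀ a b c : Fin 4, a ≠ b → a ≠ c → b ≠ c →
            ¬(x ∈ A a ∧ x ∈ A b ∧ x ∈ A c) := by
          rintro a b c hab hac hbc ⟨ha, hb, hc⟩
          simp only [hA, Set.mem_setOf_eq] at ha hb hc
          have hle : x a + x b + x c ≤ ∑ i, x i := by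
            have hsum : ∑ i ∈ ({a, b, c} : Finset (Fin 4)), x i = x a + x b + x c := by
              rw [Finset.sum_insert (by simp [hab, hac]), Finset.sum_pair hbc, add_assoc]
            calc x a + x b + x c = ∑ i ∈ ({a, b, c} : Finset (Fin 4)), x i := hsum.symm
              _ ≤ ∑ i, x i := Finset.sum_le_sum_of_subset_of_nonneg (Finset.subset_univ _)
                  (fun i _ _ => hxS i)
          linarith
        have hind : ∀ ℓ, (A ℓ ∩ S).indicator (1 : (Fin 4 → ℝ) → ℝ≥0∞) x
            = if x ∈ A ℓ then 1 else 0 := by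
          intro ℓ
          by_cases h : x ∈ A ℓ
          · simp [Set.indicator_of_mem (Set.mem_inter h hxS), h]
          · simp [Set.indicator_of_notMem (fun hc : x ∈ A ℓ ∩ S => h hc.1), h]
        rw [Fin.sum_univ_four, hind 0, hind 1, hind 2, hind 3]
        have n012 := hnot3 0 1 2 (by decide) (by decide) (by decide)
        have n013 := hnot3 0 1 3 (by decide) (by decide) (by decide)
        have n023 := hnot3 0 2 3 (by decide) (by decide) (by decide)
        have n123 := hnot3 1 2 3 (by decide) (by decide) (by decide)
        by_cases h0 : x ∈ A 0 <;> by_cases h1 : x ∈ A 1 <;> by_cases h2 : x ∈ A 2 <;>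
          by_cases h3 : x ∈ A 3 <;>
          simp only [h0, h1, h2, h3, if_true, if_false, ite_true, ite_false] <;>
          first
            | exact (n012 ⟨h0, h1, h2⟩).elim
            | exact (n013 ⟨h0, h1, h3⟩).elim
            | exact (n023 ⟨h0, h2, h3⟩).elim
            | exact (n123 ⟨h1, h2, h3⟩).elim
            | norm_num
      · have : ∀ ℓ, (A ℓ ∩ S).indicator (1 : (Fin 4 → ℝ) → ℝ≥0∞) x = 0 := fun ℓ =>
          Set.indicator_of_notMem (fun h => hxS h.2) _
        simp [this]
    -- sum of measures ≤ 2
    have hsum : (∑ ℓ : Fin 4, ν (A ℓ ∩ S)) ≤ 2 := by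
      have h1 : (∑ ℓ : Fin 4, ν (A ℓ ∩ S))
          = ∫⁻ x, (∑ ℓ : Fin 4, (A ℓ ∩ S).indicator (1 : (Fin 4 → ℝ) → ℝ≥0∞) x) ∂ν := by
        rw [lintegral_finset_sum]
        · exact Finset.sum_congr rfl fun ℓ _ =>
            (lintegral_indicator_one ((hAmeas ℓ).inter hSmeas)).symm
        · exact fun ℓ _ => measurable_one.indicator ((hAmeas ℓ).inter hSmeas)
      rw [h1]
      calc _ ≤ ∫⁻ _, (2 : ℝ≥0∞) ∂ν := lintegral_mono hcount
        _ = 2 := by simp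
    have hfour : 4 * ν (A 3) ≤ 2 := by
      calc 4 * ν (A 3) = ∑ ℓ : Fin 4, ν (A ℓ) := by
            simp only [hexch, Finset.sum_const, Finset.card_univ, Fintype.card_fin,
              nsmul_eq_mul, Nat.cast_ofNat]
        _ = ∑ ℓ : Fin 4, ν (A ℓ ∩ S) := Finset.sum_congr rfl fun ℓ _ => hAS ℓ
        _ ≤ 2 := hsum
    rw [htarget]
    have h2' : ν (A 3) * 2 * 2 ≤ 1 * 2 := by
      calc ν (A 3) * 2 * 2 = 4 * ν (A 3) := by ring
        _ ≤ 2 := hfour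
        _ = 1 * 2 := by norm_num
    have h3' : ν (A 3) * 2 ≤ 1 :=
      (ENNReal.mul_le_mul_iff_left (by norm_num) (by norm_num)).1 h2'
    exact (ENNReal.le_div_iff_mul_le (Or.inl (by norm_num)) (Or.inl (by norm_num))).2 h3'
end
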